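/- arXiv:0911.3712 — 7 statements merged into one kernel-verified Lean document; each statement's English description precedes it below -/
import Mathlib

section
/- Let P ⊆ ℝ^m be a polytope and G a group of affine transformations of ℝ^m with π.P = P for all π ∈ G. If P has an isometry-symmetric extension (with respect to G) whose polyhedron Q ⊆ ℝ^d has f facets, then P also has a coordinate-symmetric subspace extension (with respect to G) of size at most f; more precisely, there is a coordinate-symmetric extension Q' of P with Q' the intersection of an affine subspace of ℝ^f with the nonnegative orthant ℝ_+^f. -/
/-!
Replace the inequality description of `Q` by its facets. For a facet `F` let `n_F` be its unit
normal parallel to the affine hull of `Q`; for a polyhedron this normal is unique, so every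
isometry `κ` of `Q` permutes the facets and satisfies `s_{κF}(κ y) = s_F(y)` for the slacks
`s_F(y) = c_F - ⟪n_F, y⟫`. The slack map `y ↦ (s_F(y))_F` is an affine bijection of `Q` onto the
slice of the nonnegative orthant by the image of the affine hull, the projection factors through
it because `p(Q)` is bounded, and the isometries turn into coordinate permutations. Each facet is
cut out by one of the `f` inequalities, so there are at most `f` facets, and padding with zero
coordinates gives the extension in `ℝ^f`.
-/

open scoped RealInnerProductSpace Matrix
open Set Filter Topology

lemma LinearMap.exists_comp_eq_of_ker_le {K V W U : Type*} [Field K] [AddCommGroup V]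
    [Module K V] [AddCommGroup W] [Module K W] [AddCommGroup U] [Module K U] (f : V →ₗ[K] W)
    (g : V →ₗ[K] U) (h : LinearMap.ker f ≤ LinearMap.ker g) : ∃ g' : W →ₗ[K] U, g' ∘ₗ f = g := by
  obtain ⟨l, hl⟩ := LinearMap.exists_leftInverse_of_injective ((LinearMap.ker f).liftQ f le_rfl)
    (Submodule.ker_liftQ_eq_bot _ _ _ le_rfl)
  refine ⟨(LinearMap.ker f).liftQ g h ∘ₗ l, LinearMap.ext fun v => ?_⟩
  have hv := LinearMap.congr_fun hl (Submodule.Quotient.mk v)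
  simp only [LinearMap.coe_comp, Function.comp_apply, Submodule.liftQ_apply,
    LinearMap.id_coe, id_eq] at hv
  simp [hv]

lemma AffineSubspace.exists_affineMap_comp_eq {K V W U : Type*} [Field K] [AddCommGroup V]
    [Module K V] [AddCommGroup W] [Module K W] [AddCommGroup U] [Module K U]
    (A : AffineSubspace K V) (σ : V →ᵃ[K] W) (p : V →ᵃ[K] U)
    (h : ∀ v ∈ A.direction, σ.linear v = 0 → p.linear v = 0) :
    ∃ p' : W →ᵃ[K] U, ∀ y ∈ A, p' (σ y) = p y := by
  rcases (A : Set V).eq_empty_or_nonempty with hA | ⟨w, hw⟩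
  · exact ⟨0, fun y hy => absurd (hA ▸ hy : y ∈ (∅ : Set V)) (notMem_empty y)⟩
  obtain ⟨M, hM⟩ := (σ.linear ∘ₗ A.direction.subtype).exists_comp_eq_of_ker_le
    (p.linear ∘ₗ A.direction.subtype) fun v hv => h v.1 v.2 hv
  refine ⟨M.toAffineMap + AffineMap.const K W (p w - M (σ w)), fun y hy => ?_⟩
  have hyw := LinearMap.congr_fun hM ⟨y -ᵥ w, A.vsub_mem_direction hy hw⟩
  simp only [LinearMap.coe_comp, Function.comp_apply, Submodule.coe_subtype] at hyw
  rw [AffineMap.linearMap_vsub, AffineMap.linearMap_vsub, vsub_eq_sub, vsub_eq_sub, map_sub] at hyw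
  simp only [AffineMap.coe_add, LinearMap.coe_toAffineMap, AffineMap.coe_const, Pi.add_apply,
    Function.const_apply]
  rw [← sub_add_cancel (M (σ y)) (M (σ w)), hyw]
  abel

lemma AffineMap.linear_eq_zero_of_isBounded_image {V W : Type*} [AddCommGroup V] [Module ℝ V]
    [NormedAddCommGroup W] [NormedSpace ℝ W] (p : V →ᵃ[ℝ] W) {s : Set V}
    (hs : Bornology.IsBounded (p '' s)) {w v : V} (h : ∀ t : ℝ, w + t • v ∈ s) :
    p.linear v = 0 := by
  by_contra hv
  obtain ⟨C, hC⟩ := isBounded_iff_forall_norm_le.1 hs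
  have hpos : 0 < ‖p.linear v‖ := norm_pos_iff.2 hv
  have hC0 : ‖p w‖ ≤ C := hC _ (mem_image_of_mem p (by simpa using h 0))
  set t := (C + ‖p w‖ + 1) / ‖p.linear v‖
  have hpt : p (w + t • v) - p w = t • p.linear v := by
    rw [← vsub_eq_sub, ← AffineMap.linearMap_vsub, vsub_eq_sub, add_sub_cancel_left, map_smul]
  have hnorm : ‖t • p.linear v‖ = C + ‖p w‖ + 1 := by
    have hnum : 0 ≤ C + ‖p w‖ + 1 := by linarith [norm_nonneg (p w)]
    rw [norm_smul, Real.norm_of_nonneg (div_nonneg hnum hpos.le), div_mul_cancel₀ _ hpos.ne']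
  have := norm_sub_le (p (w + t • v)) (p w)
  rw [hpt, hnorm] at this
  linarith [hC _ (mem_image_of_mem p (h t))]

namespace SymmetricExtension

variable {E : Type*} [NormedAddCommGroup E] [InnerProductSpace ℝ E]

section Extension

variable {W : Type*} [AddCommGroup W] [Module ℝ W]

def orthantSection {α : Type*} (V : AffineSubspace ℝ (α → ℝ)) : Set (α → ℝ) :=
  {z | z ∈ V ∧ ∀ i, 0 ≤ z i}

/-- `P` has a coordinate-symmetric subspace extension `V ∩ ℝ₊^α` with respect to `G`;
`fun i => z (σ⁻¹ i)` is the coordinate permutation `σ.z`. -/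
def HasSymmetricSubspaceExtension (α : Type*) (P : Set W) (G : Set (W ≃ᵃ[ℝ] W)) : Prop :=
  ∃ (V : AffineSubspace ℝ (α → ℝ)) (p : (α → ℝ) →ᵃ[ℝ] W),
    p '' orthantSection V = P ∧
    ∀ π ∈ G, ∃ σ : Equiv.Perm α,
      (fun z : α → ℝ => fun i => z (σ⁻¹ i)) '' orthantSection V = orthantSection V ∧
      ∀ z ∈ orthantSection V, p (fun i => z (σ⁻¹ i)) = π (p z)

lemma orthantSection_map_extendByZero {α β : Type*} (e : α ↪ β) (V : AffineSubspace ℝ (α → ℝ)) :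
    orthantSection (V.map (Function.ExtendByZero.linearMap ℝ e).toAffineMap) =
      Function.ExtendByZero.linearMap ℝ e '' orthantSection V := by
  ext z'
  constructor
  · rintro ⟨hz'V, hz'⟩
    obtain ⟨z, hz, rfl⟩ := AffineSubspace.mem_map.1 hz'V
    refine ⟨z, ⟨hz, fun i => ?_⟩, rfl⟩
    simpa [e.injective.extend_apply] using hz' (e i)
  · rintro ⟨z, ⟨hz, hz0⟩, rfl⟩
    refine ⟨AffineSubspace.mem_map.2 ⟨z, hz, rfl⟩, fun j => ?_⟩
    by_cases hj : ∃ i, e i = j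
    · obtain ⟨i, rfl⟩ := hj
      simpa [e.injective.extend_apply] using hz0 i
    · simp [Function.extend_apply' _ _ _ hj]

lemma extendByZero_comp_viaEmbedding {α β : Type*} (e : α ↪ β) (σ : Equiv.Perm α)
    (z : α → ℝ) :
    (fun j => Function.ExtendByZero.linearMap ℝ e z ((σ.viaEmbedding e)⁻¹ j)) =
      Function.ExtendByZero.linearMap ℝ e (fun i => z (σ⁻¹ i)) := by
  have hinv : (σ.viaEmbedding e)⁻¹ = σ⁻¹.viaEmbedding e := by
    rw [← Equiv.Perm.viaEmbeddingHom_apply, ← Equiv.Perm.viaEmbeddingHom_apply, map_inv]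
  funext j
  simp only [Function.ExtendByZero.linearMap_apply, hinv]
  by_cases hj : j ∈ range e
  · obtain ⟨i, rfl⟩ := hj
    rw [Equiv.Perm.viaEmbedding_apply, e.injective.extend_apply, e.injective.extend_apply]
  · rw [Equiv.Perm.viaEmbedding_apply_of_notMem _ _ _ hj, Function.extend_apply' _ _ _ hj,
      Function.extend_apply' _ _ _ hj]

lemma funLeft_extendByZero {α β : Type*} (e : α ↪ β) (z : α → ℝ) :
    LinearMap.funLeft ℝ ℝ e (Function.ExtendByZero.linearMap ℝ e z) = z :=
  funext fun i => e.injective.extend_apply z 0 i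

lemma HasSymmetricSubspaceExtension.of_embedding {α β : Type*} {P : Set W}
    {G : Set (W ≃ᵃ[ℝ] W)} (h : HasSymmetricSubspaceExtension α P G) (e : α ↪ β) :
    HasSymmetricSubspaceExtension β P G := by
  obtain ⟨V, p, hP, hG⟩ := h
  refine ⟨V.map (Function.ExtendByZero.linearMap ℝ e).toAffineMap,
    p.comp (LinearMap.funLeft ℝ ℝ e).toAffineMap, ?_, fun π hπ => ?_⟩
  · rw [orthantSection_map_extendByZero, image_image]
    simpa [funLeft_extendByZero] using hP
  obtain ⟨σ, hσV, hσp⟩ := hG π hπ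
  refine ⟨σ.viaEmbedding e, ?_, ?_⟩
  · rw [orthantSection_map_extendByZero, image_image]
    simp_rw [extendByZero_comp_viaEmbedding]
    rw [← image_image (Function.ExtendByZero.linearMap ℝ e) (fun (z : α → ℝ) i => z (σ⁻¹ i)), hσV]
  · rw [orthantSection_map_extendByZero]
    rintro _ ⟨z, hz, rfl⟩
    simp only [extendByZero_comp_viaEmbedding, AffineMap.coe_comp, LinearMap.coe_toAffineMap,
      Function.comp_apply, funLeft_extendByZero]
    exact hσp z hz

end Extension

section Faces

variable (Q : Set E)

def IsExposedBy (a : E) (c : ℝ) (F : Set E) : Prop :=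
  (∀ y ∈ Q, ⟪a, y⟫ ≤ c) ∧ F = {y ∈ Q | ⟪a, y⟫ = c}

def IsProperFace (F : Set E) : Prop :=
  F.Nonempty ∧ F ≠ Q ∧ ∃ a c, IsExposedBy Q a c F

def IsFacet (F : Set E) : Prop :=
  Maximal (IsProperFace Q) F

abbrev Facet : Type _ := {F : Set E // IsFacet Q F}

/-- Asking for a unit normal parallel to the affine hull of `Q` singles out one normal per facet
(`IsFacet.isUnitNormal_unique`), which makes facet slacks equivariant under isometries. -/
structure IsUnitNormal (n : E) (c : ℝ) (F : Set E) : Prop where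
  mem_direction : n ∈ (affineSpan ℝ Q).direction
  norm_eq_one : ‖n‖ = 1
  isExposedBy : IsExposedBy Q n c F

variable {Q}

lemma IsExposedBy.subset {a : E} {c : ℝ} {F : Set E} (h : IsExposedBy Q a c F) : F ⊆ Q := by
  rw [h.2]; exact sep_subset _ _

lemma IsExposedBy.smul {a : E} {c : ℝ} {F : Set E} (h : IsExposedBy Q a c F) {t : ℝ}
    (ht : 0 < t) : IsExposedBy Q (t • a) (t * c) F := by
  refine ⟨fun y hy => ?_, ?_⟩
  · rw [inner_smul_left]; exact mul_le_mul_of_nonneg_left (h.1 y hy) ht.le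
  · simp_rw [h.2, inner_smul_left, RCLike.conj_to_real, mul_right_inj' ht.ne']

lemma IsExposedBy.convex {a : E} {c : ℝ} {F : Set E} (hQ : Convex ℝ Q)
    (h : IsExposedBy Q a c F) : Convex ℝ F := by
  rw [h.2]
  refine fun x hx y hy s t hs ht hst => ⟨hQ hx.1 hy.1 hs ht hst, ?_⟩
  simp only [inner_add_right, inner_smul_right, hx.2, hy.2]
  rw [← add_mul, hst, one_mul]

lemma inner_eq_zero_of_mem_direction {x : E} {c : ℝ} (hx : ∀ y ∈ Q, ⟪x, y⟫ = c) {v : E}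
    (hv : v ∈ (affineSpan ℝ Q).direction) : ⟪x, v⟫ = 0 := by
  rw [direction_affineSpan, vectorSpan_def] at hv
  refine Submodule.span_induction ?_ (inner_zero_right x) (fun u w _ _ hu hw => ?_)
    (fun t u _ hu => ?_) hv
  · rintro _ ⟨y, hy, z, hz, rfl⟩
    change ⟪x, y - z⟫ = 0
    rw [inner_sub_right, hx y hy, hx z hz, sub_self]
  · rw [inner_add_right, hu, hw, add_zero]
  · rw [inner_smul_right, hu, mul_zero]

lemma sub_mem_direction {x y : E} (hx : x ∈ Q) (hy : y ∈ Q) :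
    x - y ∈ (affineSpan ℝ Q).direction :=
  AffineSubspace.vsub_mem_direction (subset_affineSpan ℝ Q hx) (subset_affineSpan ℝ Q hy)

lemma IsExposedBy.exists_isUnitNormal [FiniteDimensional ℝ E] {a : E} {c : ℝ} {F : Set E}
    (h : IsExposedBy Q a c F) (hne : F.Nonempty) (hF : F ≠ Q) :
    ∃ n c', IsUnitNormal Q n c' F := by
  set D := (affineSpan ℝ Q).direction
  obtain ⟨z, hz⟩ := hne
  have hzQ := h.subset hz
  have hzc : ⟪a, z⟫ = c := (h.2 ▸ hz).2
  set g := D.starProjection a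
  -- `g` and `a` agree on differences of points of `Q`, so `⟪g, ·⟫` exposes the same face
  have hg : ∀ y ∈ Q, ⟪g, y⟫ - ⟪g, z⟫ = ⟪a, y⟫ - c := by
    intro y hy
    rw [← hzc, ← inner_sub_right, ← inner_sub_right, Submodule.inner_starProjection_left_eq_right,
      Submodule.starProjection_eq_self_iff.2 (sub_mem_direction hy hzQ)]
  have hexp : IsExposedBy Q g ⟪g, z⟫ F := by
    refine ⟨fun y hy => by linarith [hg y hy, h.1 y hy], ?_⟩
    rw [h.2]
    ext y
    simp only [mem_ofPred_eq, and_congr_right_iff]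
    intro hy
    constructor <;> intro hy' <;> linarith [hg y hy]
  have hg0 : g ≠ 0 := by
    rintro hg0
    refine hF (Subset.antisymm h.subset fun y hy => ?_)
    rw [h.2]
    refine ⟨hy, ?_⟩
    have := hg y hy
    rw [hg0, inner_zero_left, inner_zero_left, sub_self] at this
    linarith
  refine ⟨‖g‖⁻¹ • g, ‖g‖⁻¹ * ⟪g, z⟫, D.smul_mem _ (D.starProjection_apply_mem a), ?_,
    hexp.smul (inv_pos.2 (norm_pos_iff.2 hg0))⟩
  rw [norm_smul, norm_inv, norm_norm, inv_mul_cancel₀ (norm_ne_zero_iff.2 hg0)]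

lemma IsProperFace.convex {F : Set E} (hQ : Convex ℝ Q) (h : IsProperFace Q F) :
    Convex ℝ F :=
  let ⟨_, _, _, _, hexp⟩ := h
  hexp.convex hQ

lemma IsProperFace.exists_isUnitNormal [FiniteDimensional ℝ E] {F : Set E}
    (h : IsProperFace Q F) : ∃ n c, IsUnitNormal Q n c F :=
  let ⟨hne, hF, _, _, hexp⟩ := h
  hexp.exists_isUnitNormal hne hF

section Isometry

lemma inner_linearIsometryEquiv_apply (κ : E ≃ᵃⁱ[ℝ] E) (a y : E) :
    ⟪κ.linearIsometryEquiv a, κ y⟫ = ⟪a, y⟫ + ⟪κ.linearIsometryEquiv a, κ 0⟫ := by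
  have : κ y = κ.linearIsometryEquiv y + κ 0 := by simpa using κ.map_vadd 0 y
  rw [this, inner_add_right, LinearIsometryEquiv.inner_map_map]

variable {κ : E ≃ᵃⁱ[ℝ] E}

lemma image_symm_eq_of_image_eq (hκ : κ '' Q = Q) : κ.symm '' Q = Q := by
  conv_lhs => rw [← hκ]
  simp [image_image]

lemma IsExposedBy.image (hκ : κ '' Q = Q) {a : E} {c : ℝ} {F : Set E}
    (h : IsExposedBy Q a c F) :
    IsExposedBy Q (κ.linearIsometryEquiv a) (c + ⟪κ.linearIsometryEquiv a, κ 0⟫) (κ '' F) := by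
  refine ⟨fun y hy => ?_, ?_⟩
  · rw [← hκ] at hy
    obtain ⟨x, hx, rfl⟩ := hy
    rw [inner_linearIsometryEquiv_apply]
    linarith [h.1 x hx]
  · rw [h.2]
    ext y
    constructor
    · rintro ⟨x, ⟨hx, hxc⟩, rfl⟩
      exact ⟨hκ ▸ mem_image_of_mem κ hx, by rw [inner_linearIsometryEquiv_apply, hxc]⟩
    · rintro ⟨hy, hyc⟩
      rw [← hκ] at hy
      obtain ⟨x, hx, rfl⟩ := hy
      rw [inner_linearIsometryEquiv_apply] at hyc
      exact ⟨x, ⟨hx, by linarith⟩, rfl⟩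

lemma IsProperFace.image (hκ : κ '' Q = Q) {F : Set E} (h : IsProperFace Q F) :
    IsProperFace Q (κ '' F) :=
  let ⟨hne, hF, _, _, hexp⟩ := h
  ⟨hne.image κ, fun h' => hF (image_injective.2 κ.injective (h'.trans hκ.symm)), _, _,
    hexp.image hκ⟩

lemma IsFacet.image (hκ : κ '' Q = Q) {F : Set E} (h : IsFacet Q F) : IsFacet Q (κ '' F) := by
  refine ⟨h.1.image hκ, fun F' hF' hsub => ?_⟩
  have hsub' : F ⊆ κ.symm '' F' := fun x hx =>
    ⟨κ x, hsub (mem_image_of_mem κ hx), κ.symm_apply_apply x⟩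
  have hle := h.2 (hF'.image (image_symm_eq_of_image_eq hκ)) hsub'
  exact fun y hy => ⟨κ.symm y, hle (mem_image_of_mem _ hy), κ.apply_symm_apply y⟩

lemma IsUnitNormal.image (hκ : κ '' Q = Q) {n : E} {c : ℝ} {F : Set E}
    (h : IsUnitNormal Q n c F) :
    IsUnitNormal Q (κ.linearIsometryEquiv n) (c + ⟪κ.linearIsometryEquiv n, κ 0⟫) (κ '' F) := by
  refine ⟨?_, by rw [LinearIsometryEquiv.norm_map, h.norm_eq_one], h.isExposedBy.image hκ⟩
  have hκ' : ⇑κ.toAffineEquiv '' Q = Q := hκ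
  have hD := AffineSubspace.map_direction κ.toAffineEquiv.toAffineMap (affineSpan ℝ Q)
  rw [AffineSubspace.map_span, AffineEquiv.coe_toAffineMap, hκ'] at hD
  rw [hD]
  exact Submodule.mem_map_of_mem h.mem_direction

def facetPerm (hκ : κ '' Q = Q) : Equiv.Perm (Facet Q) where
  toFun F := ⟨κ '' F, F.2.image hκ⟩
  invFun F := ⟨κ.symm '' F, F.2.image (image_symm_eq_of_image_eq hκ)⟩
  left_inv F := Subtype.ext (by simp [image_image])
  right_inv F := Subtype.ext (by simp [image_image])

end Isometry

end Faces

section FacetSlack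

variable [FiniteDimensional ℝ E] {Q : Set E}

noncomputable def facetNormal (F : Facet Q) : E :=
  F.2.1.exists_isUnitNormal.choose

noncomputable def facetOffset (F : Facet Q) : ℝ :=
  F.2.1.exists_isUnitNormal.choose_spec.choose

lemma isUnitNormal_facetNormal (F : Facet Q) :
    IsUnitNormal Q (facetNormal F) (facetOffset F) F.1 :=
  F.2.1.exists_isUnitNormal.choose_spec.choose_spec

variable (Q) in
noncomputable def facetSlack : E →ᵃ[ℝ] (Facet Q → ℝ) :=
  AffineMap.pi fun F =>
    AffineMap.const ℝ E (facetOffset F) - (innerₗ E (facetNormal F)).toAffineMap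

lemma facetSlack_apply (y : E) (F : Facet Q) :
    facetSlack Q y F = facetOffset F - ⟪facetNormal F, y⟫ := by
  simp [facetSlack]

lemma facetSlack_nonneg {y : E} (hy : y ∈ Q) (F : Facet Q) : 0 ≤ facetSlack Q y F := by
  rw [facetSlack_apply, sub_nonneg]
  exact (isUnitNormal_facetNormal F).isExposedBy.1 y hy

end FacetSlack

lemma inner_smul_starProjection {D : Submodule ℝ E} [D.HasOrthogonalProjection] (t : ℝ)
    (a : E) {x : E} (hx : x ∈ D) : ⟪t • D.starProjection a, x⟫ = t * ⟪a, x⟫ := by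
  rw [inner_smul_left, RCLike.conj_to_real, Submodule.inner_starProjection_left_eq_right,
    D.starProjection_eq_self_iff.2 hx]

lemma eq_of_forall_inner_nonpos {ι : Type*} {D : Submodule ℝ E} {J : Finset ι} {m : ι → E}
    (hm : ∀ k ∈ J, m k ∈ D) {v : E} (hv : v ∈ D) (hmv : ∀ k ∈ J, ⟪m k, v⟫ = -1)
    (H : ∀ x ∈ D, (∀ k ∈ J, ⟪m k, x⟫ ≤ 0) → ∀ j ∈ J, ⟪m j, x⟫ = 0 → ∀ k ∈ J, ⟪m k, x⟫ = 0) :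
    ∀ j ∈ J, ∀ k ∈ J, m j = m k := by
  intro j hj k hk
  obtain ⟨⟨p, q⟩, hpq, hmax⟩ := (J ×ˢ J).exists_max_image (fun pq => ‖m pq.1 - m pq.2‖)
    ⟨(j, k), Finset.mk_mem_product hj hk⟩
  obtain ⟨hp, hq⟩ := Finset.mem_product.1 hpq
  obtain ⟨r, hr⟩ : ∃ r, m p - m q = r := ⟨_, rfl⟩
  rw [hr] at hmax
  -- `(p, q)` is a diametral pair, so all `m l` lie on the side of `m p` away from `m q`
  have hside : ∀ l ∈ J, ⟪r, m l - m p⟫ ≤ 0 := by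
    intro l hl
    have hlq : ‖m l - m q‖ ≤ ‖r‖ := hmax (l, q) (Finset.mk_mem_product hl hq)
    have hsq : ‖m l - m q‖ ^ 2 = ‖m l - m p‖ ^ 2 + 2 * ⟪m l - m p, r⟫ + ‖r‖ ^ 2 := by
      rw [← hr, show m l - m q = (m l - m p) + (m p - m q) by abel, hr]
      exact norm_add_sq_real _ _
    rw [real_inner_comm]
    nlinarith [sq_nonneg ‖m l - m p‖, norm_nonneg (m l - m q)]
  set x := r + ⟪r, m p⟫ • v
  have hx : ∀ l ∈ J, ⟪m l, x⟫ = ⟪r, m l - m p⟫ := by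
    intro l hl
    rw [inner_add_right, inner_smul_right, hmv l hl, inner_sub_right, real_inner_comm r]
    ring
  have hxD : x ∈ D := D.add_mem (hr ▸ D.sub_mem (hm p hp) (hm q hq)) (D.smul_mem _ hv)
  have hq0 := H x hxD (fun l hl => (hx l hl).trans_le (hside l hl)) p hp
    (by rw [hx p hp, sub_self, inner_zero_right]) q hq
  rw [hx q hq, ← neg_sub, hr, inner_neg_right, neg_eq_zero,
    real_inner_self_eq_norm_sq, sq_eq_zero_iff] at hq0
  have hjk : ‖m j - m k‖ ≤ 0 := hq0 ▸ hmax (j, k) (Finset.mk_mem_product hj hk)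
  exact sub_eq_zero.1 (norm_le_zero_iff.1 hjk)

lemma eq_smul_of_forall_inner_eq_zero {D : Submodule ℝ E} {m n : E} (hm : m ∈ D) (hn : n ∈ D)
    (h : ∀ x ∈ D, ⟪m, x⟫ = 0 → ⟪n, x⟫ = 0) : n = (⟪m, n⟫ / ‖m‖ ^ 2) • m := by
  set x := n - (⟪m, n⟫ / ‖m‖ ^ 2) • m
  have hmx : ⟪m, x⟫ = 0 := by
    rcases eq_or_ne m 0 with rfl | hm0
    · exact inner_zero_left _
    rw [inner_sub_right, inner_smul_right, real_inner_self_eq_norm_sq,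
      div_mul_cancel₀ _ (pow_ne_zero 2 (norm_ne_zero_iff.2 hm0)), sub_self]
  have hnx := h x (D.sub_mem hn (D.smul_mem _ hm)) hmx
  have hxx : ⟪x, x⟫ = 0 := by
    rw [inner_sub_left, inner_smul_left, hnx, hmx, mul_zero, sub_zero]
  exact sub_eq_zero.1 (inner_self_eq_zero.1 hxx)

lemma eq_of_norm_eq_one_of_inner_neg {m n₁ n₂ v : E} {t₁ t₂ : ℝ} (e₁ : n₁ = t₁ • m)
    (e₂ : n₂ = t₂ • m) (hn₁ : ‖n₁‖ = 1) (hn₂ : ‖n₂‖ = 1) (hv₁ : ⟪n₁, v⟫ < 0)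
    (hv₂ : ⟪n₂, v⟫ < 0) : n₁ = n₂ := by
  subst e₁ e₂
  rw [inner_smul_left, RCLike.conj_to_real] at hv₁ hv₂
  rw [norm_smul, Real.norm_eq_abs] at hn₁ hn₂
  have hm : ‖m‖ ≠ 0 := by
    rintro h
    rw [h, mul_zero] at hn₁
    exact zero_ne_one hn₁
  rcases abs_eq_abs.1 (mul_right_cancel₀ hm (hn₁.trans hn₂.symm)) with h | h
  · rw [h]
  · rw [h, neg_mul] at hv₁
    linarith


section Polyhedron

variable {ι : Type*} (S : AffineSubspace ℝ E) (a : ι → E) (b : ι → ℝ)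

def polyhedron : Set E := {y | y ∈ S ∧ ∀ i, ⟪a i, y⟫ ≤ b i}

def solutionSubspace {κ : Type*} (n : κ → E) (c : κ → ℝ) : AffineSubspace ℝ E where
  carrier := {y | ∀ i, ⟪n i, y⟫ = c i}
  smul_vsub_vadd_mem' t y₁ y₂ y₃ h₁ h₂ h₃ i := by
    simp only [vsub_eq_sub, vadd_eq_add, inner_add_right, inner_smul_right,
      inner_sub_right, h₁ i, h₂ i, h₃ i, sub_self, mul_zero, zero_add]

lemma mem_solutionSubspace {κ : Type*} {n : κ → E} {c : κ → ℝ} {y : E} :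
    y ∈ solutionSubspace n c ↔ ∀ i, ⟪n i, y⟫ = c i :=
  Iff.rfl

def tightRows (C : Set E) : Set ι := {i | ∀ y ∈ C, ⟪a i, y⟫ = b i}

/-- For a face `C` of the polyhedron this is a relative interior point of `C`. -/
def IsRelIntPoint (C : Set E) (w : E) : Prop :=
  w ∈ C ∧ ∀ i, ⟪a i, w⟫ = b i → i ∈ tightRows a b C

variable {S a b}

local notation "Q" => polyhedron S a b

lemma convex_polyhedron : Convex ℝ Q := by
  refine fun x hx y hy s t hs ht hst => ⟨S.convex hx.1 hy.1 hs ht hst, fun i => ?_⟩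
  calc ⟪a i, s • x + t • y⟫ = s * ⟪a i, x⟫ + t * ⟪a i, y⟫ := by
        rw [inner_add_right, inner_smul_right, inner_smul_right]
    _ ≤ s * b i + t * b i :=
        add_le_add (mul_le_mul_of_nonneg_left (hx.2 i) hs) (mul_le_mul_of_nonneg_left (hy.2 i) ht)
    _ = b i := by rw [← add_mul, hst, one_mul]

lemma direction_affineSpan_polyhedron_le :
    (affineSpan ℝ Q).direction ≤ S.direction :=
  AffineSubspace.direction_le (affineSpan_le.2 fun _ hy => hy.1)

lemma exists_isRelIntPoint [Finite ι] {C : Set E} (hC : Convex ℝ C)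
    (hCQ : C ⊆ Q) (hne : C.Nonempty) : ∃ w, IsRelIntPoint a b C w := by
  classical
  have := Fintype.ofFinite ι
  suffices ∀ s : Finset ι, ∃ w ∈ C, ∀ i ∈ s, ⟪a i, w⟫ = b i → i ∈ tightRows a b C by
    obtain ⟨w, hw, h⟩ := this Finset.univ
    exact ⟨w, hw, fun i => h i (Finset.mem_univ i)⟩
  intro s
  induction s using Finset.induction_on with
  | empty =>
    obtain ⟨w, hw⟩ := hne
    exact ⟨w, hw, by simp⟩
  | insert j s _ ih =>
    obtain ⟨w, hw, hws⟩ := ih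
    by_cases hj : j ∈ tightRows a b C
    · exact ⟨w, hw, fun i hi => (Finset.mem_insert.1 hi).elim (fun h _ => h ▸ hj) (hws i)⟩
    obtain ⟨y, hy, hyj⟩ : ∃ y ∈ C, ⟪a j, y⟫ ≠ b j := by simpa [tightRows] using hj
    -- a row tight at the midpoint of `w` and `y` is tight at both
    refine ⟨(1 / 2 : ℝ) • w + (1 / 2 : ℝ) • y, hC hw hy (by norm_num) (by norm_num) (by norm_num),
      fun i hi hmid => ?_⟩
    rw [inner_add_right, inner_smul_right, inner_smul_right] at hmid
    have hwi := (hCQ hw).2 i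
    have hyi := (hCQ hy).2 i
    rcases Finset.mem_insert.1 hi with rfl | hi
    · exact absurd (by linarith) hyj
    · exact hws i hi (by linarith)

lemma exists_pos_add_smul_mem [Finite ι] {w v : E} (hw : w ∈ Q)
    (hv : v ∈ S.direction) (h : ∀ i, ⟪a i, w⟫ = b i → ⟪a i, v⟫ ≤ 0) :
    ∃ ε : ℝ, 0 < ε ∧ w + ε • v ∈ Q := by
  have hev : ∀ i, ∀ᶠ ε in 𝓝[>] (0 : ℝ), ⟪a i, w + ε • v⟫ ≤ b i := by
    intro i
    rcases (hw.2 i).lt_or_eq with hlt | heq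
    · have hc : ContinuousAt (fun ε : ℝ => ⟪a i, w + ε • v⟫) 0 := by fun_prop
      exact ((hc.eventually_lt continuousAt_const (by simpa using hlt)).filter_mono
        nhdsWithin_le_nhds).mono fun _ h => h.le
    · filter_upwards [self_mem_nhdsWithin] with ε hε
      rw [inner_add_right, inner_smul_right, heq]
      nlinarith [h i heq, mem_Ioi.1 hε]
  obtain ⟨ε, hε, hpos⟩ := ((eventually_all.2 hev).and self_mem_nhdsWithin).exists
  refine ⟨ε, hpos, ?_, hε⟩
  rw [add_comm]
  exact AffineSubspace.vadd_mem_of_mem_direction (S.direction.smul_mem ε hv) hw.1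

lemma IsExposedBy.eq_setOf_tightRows [Finite ι] {n : E} {c : ℝ} {F : Set E}
    (h : IsExposedBy Q n c F) (hne : F.Nonempty) :
    F = {y ∈ Q | ∀ i ∈ tightRows a b F, ⟪a i, y⟫ = b i} := by
  refine Subset.antisymm (fun y hy => ⟨h.subset hy, fun i hi => hi y hy⟩) ?_
  rintro u ⟨huQ, hu⟩
  obtain ⟨w, hwF, hw⟩ := exists_isRelIntPoint (h.convex convex_polyhedron) h.subset hne
  have hwQ := h.subset hwF
  -- `Q` contains a point beyond `w` on the line from `u` through `w`, and `⟪n, ·⟫` peaks at `w`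
  obtain ⟨ε, hε, hmem⟩ := exists_pos_add_smul_mem (v := w - u) hwQ
    (AffineSubspace.vsub_mem_direction hwQ.1 huQ.1) fun i hi => by
      rw [inner_sub_right, hi, hu i (hw i hi), sub_self]
  have hwc : ⟪n, w⟫ = c := (h.2 ▸ hwF).2
  have hle := h.1 _ hmem
  rw [inner_add_right, inner_smul_right, inner_sub_right, hwc] at hle
  rw [h.2]
  exact ⟨huQ, le_antisymm (h.1 u huQ) (by nlinarith)⟩

lemma IsProperFace.subset {F : Set E} (h : IsProperFace Q F) :
    F ⊆ Q :=
  let ⟨_, _, _, _, hexp⟩ := h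
  hexp.subset

lemma IsProperFace.eq_setOf_tightRows [Finite ι] {F : Set E}
    (h : IsProperFace Q F) :
    F = {y ∈ Q | ∀ i ∈ tightRows a b F, ⟪a i, y⟫ = b i} :=
  let ⟨hne, _, _, _, hexp⟩ := h
  hexp.eq_setOf_tightRows hne

lemma finite_setOf_isProperFace [Finite ι] :
    {F | IsProperFace Q F}.Finite :=
  Finite.of_finite_image (f := tightRows a b) (toFinite _) fun F hF F' hF' h => by
    rw [IsProperFace.eq_setOf_tightRows hF, IsProperFace.eq_setOf_tightRows hF', h]

lemma IsProperFace.exists_superset_isFacet [Finite ι] {F : Set E}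
    (h : IsProperFace Q F) : ∃ M, IsFacet Q M ∧ F ⊆ M :=
  let ⟨M, hFM, hM⟩ := finite_setOf_isProperFace.exists_le_maximal h
  ⟨M, hM, hFM⟩

lemma isProperFace_setOf_inner_eq {i : ι} (hi : i ∉ tightRows a b Q)
    {z : E} (hz : z ∈ Q) (hzi : ⟪a i, z⟫ = b i) :
    IsProperFace Q {y ∈ Q | ⟪a i, y⟫ = b i} := by
  refine ⟨⟨z, hz, hzi⟩, fun h => hi fun y hy => ?_, a i, b i, fun y hy => hy.2 i, rfl⟩
  rw [← h] at hy
  exact hy.2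

lemma IsRelIntPoint.notMem_of_isProperFace [Finite ι] {w : E}
    (hw : IsRelIntPoint a b Q w) {F : Set E}
    (hF : IsProperFace Q F) : w ∉ F := by
  intro hwF
  refine hF.2.1 (Subset.antisymm hF.subset fun y hy => ?_)
  rw [hF.eq_setOf_tightRows]
  exact ⟨hy, fun i hi => hw.2 i (hi w hwF) y hy⟩

lemma IsFacet.exists_tightRow [Finite ι] {F : Set E} (h : IsFacet Q F) :
    ∃ i ∈ tightRows a b F, i ∉ tightRows a b Q := by
  by_contra! hcon
  refine h.1.2.1 (Subset.antisymm h.1.subset fun y hy => ?_)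
  rw [h.1.eq_setOf_tightRows]
  exact ⟨hy, fun i hi => hcon i hi y hy⟩

lemma IsFacet.eq_setOf_inner_eq {F : Set E} (h : IsFacet Q F) {i : ι}
    (hiF : i ∈ tightRows a b F) (hiQ : i ∉ tightRows a b Q) :
    F = {y ∈ Q | ⟪a i, y⟫ = b i} := by
  obtain ⟨z, hz⟩ := h.1.1
  have hsub : F ⊆ {y ∈ Q | ⟪a i, y⟫ = b i} := fun y hy =>
    ⟨h.1.subset hy, hiF y hy⟩
  exact Subset.antisymm hsub (h.2 (isProperFace_setOf_inner_eq hiQ (h.1.subset hz) (hiF z hz)) hsub)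

lemma IsProperFace.exists_add_smul_mem [Finite ι] {F : Set E}
    (hF : IsProperFace Q F) {w x : E} (hw : IsRelIntPoint a b F w)
    (hx : x ∈ S.direction) (h : ∀ i ∈ tightRows a b F, ⟪a i, x⟫ = 0) :
    ∃ ε : ℝ, 0 < ε ∧ w + ε • x ∈ F := by
  obtain ⟨ε, hε, hmem⟩ := exists_pos_add_smul_mem (hF.subset hw.1) hx fun i hi =>
    (h i (hw.2 i hi)).le
  refine ⟨ε, hε, ?_⟩
  rw [hF.eq_setOf_tightRows]
  refine ⟨hmem, fun i hi => ?_⟩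
  rw [inner_add_right, inner_smul_right, h i hi, mul_zero, add_zero]
  exact hi w hw.1

lemma IsFacet.inner_eq_zero_of_inner_nonpos [Finite ι] {F : Set E}
    (hF : IsFacet Q F) {w x : E} (hw : IsRelIntPoint a b F w)
    (hx : x ∈ S.direction) (hle : ∀ k ∈ tightRows a b F, ⟪a k, x⟫ ≤ 0) {j : ι}
    (hjF : j ∈ tightRows a b F) (hjQ : j ∉ tightRows a b Q)
    (hj : ⟪a j, x⟫ = 0) : ∀ k ∈ tightRows a b F, ⟪a k, x⟫ = 0 := by
  obtain ⟨ε, hε, hmem⟩ := exists_pos_add_smul_mem (hF.1.subset hw.1) hx fun i hi =>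
    hle i (hw.2 i hi)
  -- `F` is cut out by row `j` alone, and row `j` stays tight along `x`
  have hmemF : w + ε • x ∈ F := by
    rw [hF.eq_setOf_inner_eq hjF hjQ]
    refine ⟨hmem, ?_⟩
    rw [inner_add_right, inner_smul_right, hj, mul_zero, add_zero]
    exact hjF w hw.1
  intro k hk
  have hk' := hk _ hmemF
  rw [inner_add_right, inner_smul_right, hk w hw.1] at hk'
  exact (mul_eq_zero.1 (by linarith)).resolve_left hε.ne'

lemma IsFacet.smul_starProjection_eq [FiniteDimensional ℝ E] [Finite ι] {F : Set E}
    (hF : IsFacet Q F) {w₀ : E} (hw₀ : IsRelIntPoint a b Q w₀) {j k : ι}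
    (hjF : j ∈ tightRows a b F) (hjQ : j ∉ tightRows a b Q)
    (hkF : k ∈ tightRows a b F) (hkQ : k ∉ tightRows a b Q) :
    (b j - ⟪a j, w₀⟫)⁻¹ • (affineSpan ℝ Q).direction.starProjection (a j) =
      (b k - ⟪a k, w₀⟫)⁻¹ • (affineSpan ℝ Q).direction.starProjection (a k) := by
  classical
  have := Fintype.ofFinite ι
  set D := (affineSpan ℝ Q).direction
  obtain ⟨w, hw⟩ := exists_isRelIntPoint (hF.1.convex convex_polyhedron) hF.1.subset hF.1.1
  set J := Finset.univ.filter fun i => i ∈ tightRows a b F ∧ i ∉ tightRows a b Q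
  have hJ : ∀ {i}, i ∈ J ↔ i ∈ tightRows a b F ∧ i ∉ tightRows a b Q := by simp [J]
  have hslack : ∀ i ∈ J, 0 < (b i - ⟪a i, w₀⟫)⁻¹ := fun i hi =>
    inv_pos.2 (sub_pos.2 ((hw₀.1.2 i).lt_of_ne fun h => (hJ.1 hi).2 (hw₀.2 i h)))
  have hv : w₀ - w ∈ D := sub_mem_direction hw₀.1 (hF.1.subset hw.1)
  -- the scaled projected rows all take the value `-1` on `w₀ - w`
  refine eq_of_forall_inner_nonpos (J := J)
    (m := fun i => (b i - ⟪a i, w₀⟫)⁻¹ • D.starProjection (a i))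
    (fun _ _ => D.smul_mem _ (D.starProjection_apply_mem _)) hv (fun i hi => ?_)
    (fun x hx hle i hi hi0 l hl => ?_) j (hJ.2 ⟨hjF, hjQ⟩) k (hJ.2 ⟨hkF, hkQ⟩)
  · have hi0 := (inv_pos.1 (hslack i hi)).ne'
    rw [inner_smul_starProjection _ _ hv, inner_sub_right, (hJ.1 hi).1 w hw.1]
    field_simp
    ring
  have hrow : ∀ r ∈ tightRows a b F, ⟪a r, x⟫ ≤ 0 := by
    intro r hr
    by_cases hrQ : r ∈ tightRows a b Q
    · exact (inner_eq_zero_of_mem_direction hrQ hx).le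
    · have hrJ := hJ.2 ⟨hr, hrQ⟩
      have := hle r hrJ
      rw [inner_smul_starProjection _ _ hx] at this
      nlinarith [hslack r hrJ]
  rw [inner_smul_starProjection _ _ hx, mul_eq_zero] at hi0
  rw [inner_smul_starProjection _ _ hx, hF.inner_eq_zero_of_inner_nonpos hw
    (direction_affineSpan_polyhedron_le hx) hrow (hJ.1 hi).1 (hJ.1 hi).2
    (hi0.resolve_left (hslack i hi).ne') l (hJ.1 hl).1, mul_zero]

lemma IsFacet.exists_forall_inner_eq_zero [FiniteDimensional ℝ E] [Finite ι] {F : Set E}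
    (hF : IsFacet Q F) {w : E} (hw : IsRelIntPoint a b F w) :
    ∃ m ∈ (affineSpan ℝ Q).direction,
      ∀ x ∈ (affineSpan ℝ Q).direction, ⟪m, x⟫ = 0 →
        ∃ ε : ℝ, 0 < ε ∧ w + ε • x ∈ F := by
  set D := (affineSpan ℝ Q).direction
  obtain ⟨w₀, hw₀⟩ := exists_isRelIntPoint convex_polyhedron Subset.rfl ⟨w, hF.1.subset hw.1⟩
  obtain ⟨k, hkF, hkQ⟩ := hF.exists_tightRow
  refine ⟨(b k - ⟪a k, w₀⟫)⁻¹ • D.starProjection (a k), D.smul_mem _ (D.starProjection_apply_mem _),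
    fun x hx hx0 => hF.1.exists_add_smul_mem hw (direction_affineSpan_polyhedron_le hx)
      fun i hi => ?_⟩
  by_cases hiQ : i ∈ tightRows a b Q
  · exact inner_eq_zero_of_mem_direction hiQ hx
  have hslack : 0 < b i - ⟪a i, w₀⟫ := sub_pos.2 ((hw₀.1.2 i).lt_of_ne fun h => hiQ (hw₀.2 i h))
  rw [← hF.smul_starProjection_eq hw₀ hi hiQ hkF hkQ, inner_smul_starProjection _ _ hx,
    mul_eq_zero] at hx0
  exact hx0.resolve_left (inv_ne_zero hslack.ne')

lemma IsFacet.isUnitNormal_unique [FiniteDimensional ℝ E] [Finite ι] {F : Set E}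
    (hF : IsFacet Q F) {n₁ n₂ : E} {c₁ c₂ : ℝ}
    (h₁ : IsUnitNormal Q n₁ c₁ F)
    (h₂ : IsUnitNormal Q n₂ c₂ F) : n₁ = n₂ ∧ c₁ = c₂ := by
  obtain ⟨w, hw⟩ := exists_isRelIntPoint (hF.1.convex convex_polyhedron) hF.1.subset hF.1.1
  obtain ⟨m, hmD, hm⟩ := hF.exists_forall_inner_eq_zero hw
  obtain ⟨y, hyQ, hyF⟩ : ∃ y ∈ Q, y ∉ F :=
    not_subset.1 fun h => hF.1.2.1 (Subset.antisymm hF.1.subset h)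
  have key : ∀ n c, IsUnitNormal Q n c F →
      n = (⟪m, n⟫ / ‖m‖ ^ 2) • m ∧ ⟪n, y - w⟫ < 0 ∧ c = ⟪n, w⟫ := by
    intro n c hn
    have hc : ⟪n, w⟫ = c := (hn.isExposedBy.2 ▸ hw.1).2
    refine ⟨eq_smul_of_forall_inner_eq_zero hmD hn.mem_direction fun x hx hx0 => ?_, ?_, hc.symm⟩
    · obtain ⟨ε, hε, hmem⟩ := hm x hx hx0
      have hmem' := (hn.isExposedBy.2 ▸ hmem).2
      rw [inner_add_right, inner_smul_right, hc] at hmem'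
      exact (mul_eq_zero.1 (by linarith)).resolve_left hε.ne'
    · rw [inner_sub_right, hc, sub_neg]
      exact (hn.isExposedBy.1 y hyQ).lt_of_ne fun h => hyF (hn.isExposedBy.2 ▸ ⟨hyQ, h⟩)
  obtain ⟨e₁, hv₁, hc₁⟩ := key n₁ c₁ h₁
  obtain ⟨e₂, hv₂, hc₂⟩ := key n₂ c₂ h₂
  have hn : n₁ = n₂ := eq_of_norm_eq_one_of_inner_neg e₁ e₂ h₁.norm_eq_one h₂.norm_eq_one hv₁ hv₂
  exact ⟨hn, by rw [hc₁, hc₂, hn]⟩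

lemma IsRelIntPoint.exists_mem_inner_eq [Finite ι] {w₀ y : E}
    (hw₀ : IsRelIntPoint a b Q w₀) (hy : y ∈ affineSpan ℝ Q)
    (hyQ : y ∉ Q) :
    ∃ t ∈ Ioo (0 : ℝ) 1, ∃ k ∉ tightRows a b Q,
      w₀ + t • (y - w₀) ∈ Q ∧ ⟪a k, w₀ + t • (y - w₀)⟫ = b k := by
  classical
  have := Fintype.ofFinite ι
  have hu : y - w₀ ∈ (affineSpan ℝ Q).direction :=
    AffineSubspace.vsub_mem_direction hy (subset_affineSpan ℝ _ hw₀.1)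
  obtain ⟨i, hi⟩ : ∃ i, b i < ⟪a i, y⟫ := by
    by_contra! h
    exact hyQ ⟨affineSpan_le.2 (fun _ h => h.1) hy, h⟩
  -- the first row hit on the way from `w₀` to `y`
  set K := Finset.univ.filter fun k => 0 < ⟪a k, y - w₀⟫
  have hK : ∀ {k}, k ∈ K ↔ 0 < ⟪a k, y - w₀⟫ := by simp [K]
  set t : ι → ℝ := fun k => (b k - ⟪a k, w₀⟫) / ⟪a k, y - w₀⟫
  have hiu : b i - ⟪a i, w₀⟫ < ⟪a i, y - w₀⟫ := by rw [inner_sub_right]; linarith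
  have hiK : i ∈ K := hK.2 (by linarith [hw₀.1.2 i])
  obtain ⟨k, hkK, hmin⟩ := K.exists_min_image t ⟨i, hiK⟩
  have hk := hK.1 hkK
  have hkQ : k ∉ tightRows a b Q := fun h =>
    hk.ne' (inner_eq_zero_of_mem_direction h hu)
  have htk : 0 < t k := div_pos (sub_pos.2 ((hw₀.1.2 k).lt_of_ne fun h => hkQ (hw₀.2 k h))) hk
  refine ⟨t k, ⟨htk, (hmin i hiK).trans_lt ((div_lt_one (hK.1 hiK)).2 hiu)⟩, k, hkQ,
    ⟨?_, fun l => ?_⟩, ?_⟩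
  · rw [add_comm]
    exact AffineSubspace.vadd_mem_of_mem_direction
      (S.direction.smul_mem _ (direction_affineSpan_polyhedron_le hu)) hw₀.1.1
  · rw [inner_add_right, inner_smul_right]
    by_cases hl : 0 < ⟪a l, y - w₀⟫
    · have := hmin l (hK.2 hl)
      rw [le_div_iff₀ hl] at this
      linarith
    · nlinarith [hw₀.1.2 l]
  · rw [inner_add_right, inner_smul_right, div_mul_cancel₀ _ hk.ne']
    ring

lemma mem_polyhedron_of_forall_isFacet [Finite ι] {y : E}
    (hy : y ∈ affineSpan ℝ Q)
    (h : ∀ F, IsFacet Q F →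
      ∃ n c, IsExposedBy Q n c F ∧ ⟪n, y⟫ ≤ c) : y ∈ Q := by
  by_contra hyQ
  obtain ⟨w₀, hw₀⟩ := exists_isRelIntPoint convex_polyhedron Subset.rfl
    ((affineSpan_nonempty ℝ).1 ⟨y, hy⟩)
  obtain ⟨t, ⟨ht0, ht1⟩, k, hkQ, hz, hzk⟩ := hw₀.exists_mem_inner_eq hy hyQ
  obtain ⟨M, hM, hsub⟩ := (isProperFace_setOf_inner_eq hkQ hz hzk).exists_superset_isFacet
  obtain ⟨n, c, hexp, hyc⟩ := h M hM
  -- the supporting hyperplane of `M` passes through a point strictly between `w₀ ∉ M` and `y`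
  have hzc : ⟪n, w₀ + t • (y - w₀)⟫ = c := (hexp.2 ▸ hsub ⟨hz, hzk⟩).2
  have hw₀c : ⟪n, w₀⟫ < c := (hexp.1 w₀ hw₀.1).lt_of_ne fun h' =>
    hw₀.notMem_of_isProperFace hM.1 (hexp.2 ▸ ⟨hw₀.1, h'⟩)
  rw [inner_add_right, inner_smul_right, inner_sub_right] at hzc
  nlinarith

lemma nonempty_facet_embedding [Finite ι] : Nonempty (Facet Q ↪ ι) := by
  choose e he using fun F : Facet Q => F.2.exists_tightRow
  refine ⟨⟨e, fun F F' h => Subtype.ext ?_⟩⟩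
  rw [F.2.eq_setOf_inner_eq (he F).1 (he F).2, F'.2.eq_setOf_inner_eq (he F').1 (he F').2, h]

section

variable [FiniteDimensional ℝ E] [Finite ι]

lemma facetSlack_map_apply {κ : E ≃ᵃⁱ[ℝ] E} (hκ : κ '' Q = Q)
    (y : E) (F : Facet Q) :
    facetSlack Q (κ y) (facetPerm hκ F) = facetSlack Q y F := by
  obtain ⟨hn, hc⟩ := (facetPerm hκ F).2.isUnitNormal_unique
    (isUnitNormal_facetNormal (facetPerm hκ F)) ((isUnitNormal_facetNormal F).image hκ)
  rw [facetSlack_apply, facetSlack_apply, hn, hc, inner_linearIsometryEquiv_apply κ _ y]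
  ring

lemma facetSlack_map {κ : E ≃ᵃⁱ[ℝ] E} (hκ : κ '' Q = Q) (y : E) :
    facetSlack Q (κ y) = fun F => facetSlack Q y ((facetPerm hκ)⁻¹ F) := by
  funext F
  rw [← facetSlack_map_apply hκ y, Equiv.Perm.inv_def, Equiv.apply_symm_apply]

lemma mem_polyhedron_iff_facetSlack_nonneg {y : E} (hy : y ∈ affineSpan ℝ Q) :
    y ∈ Q ↔ ∀ F, 0 ≤ facetSlack Q y F := by
  refine ⟨facetSlack_nonneg, fun h => mem_polyhedron_of_forall_isFacet hy fun F hF => ?_⟩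
  refine ⟨_, _, (isUnitNormal_facetNormal ⟨F, hF⟩).isExposedBy, ?_⟩
  linarith [facetSlack_apply y ⟨F, hF⟩, h ⟨F, hF⟩]

lemma image_facetSlack :
    facetSlack Q '' Q =
      orthantSection ((affineSpan ℝ Q).map (facetSlack Q)) := by
  ext z
  constructor
  · rintro ⟨y, hy, rfl⟩
    exact ⟨AffineSubspace.mem_map.2 ⟨y, subset_affineSpan ℝ _ hy, rfl⟩, facetSlack_nonneg hy⟩
  · rintro ⟨hz, hz0⟩
    obtain ⟨y, hy, rfl⟩ := AffineSubspace.mem_map.1 hz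
    exact ⟨y, (mem_polyhedron_iff_facetSlack_nonneg hy).2 hz0, rfl⟩

lemma exists_affineMap_comp_facetSlack {W : Type*} [NormedAddCommGroup W] [NormedSpace ℝ W]
    (p : E →ᵃ[ℝ] W) (hp : Bornology.IsBounded (p '' Q)) :
    ∃ p' : (Facet Q → ℝ) →ᵃ[ℝ] W,
      ∀ y ∈ Q, p' (facetSlack Q y) = p y := by
  refine ((affineSpan ℝ Q).exists_affineMap_comp_eq (facetSlack Q) p fun v hv hv0 => ?_).imp
    fun p' hp' y hy => hp' y (subset_affineSpan ℝ _ hy)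
  rcases Set.eq_empty_or_nonempty Q with hQ | ⟨w, hw⟩
  · rw [hQ, AffineSubspace.span_empty, AffineSubspace.direction_bot, Submodule.mem_bot] at hv
    rw [hv, map_zero]
  -- the slack map is constant along `v`, so the whole line through `w` lies in the polyhedron
  refine p.linear_eq_zero_of_isBounded_image hp (w := w) fun t => ?_
  have hline : w + t • v ∈ affineSpan ℝ Q := by
    rw [add_comm]
    exact AffineSubspace.vadd_mem_of_mem_direction (Submodule.smul_mem _ t hv)
      (subset_affineSpan ℝ _ hw)
  refine (mem_polyhedron_iff_facetSlack_nonneg hline).2 fun F => ?_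
  rw [add_comm, ← vadd_eq_add, AffineMap.map_vadd, map_smul, hv0, smul_zero, zero_vadd]
  exact facetSlack_nonneg hw F

theorem hasSymmetricSubspaceExtension_facet {W : Type*} [NormedAddCommGroup W]
    [NormedSpace ℝ W] (p : E →ᵃ[ℝ] W) (hp : Bornology.IsBounded (p '' Q))
    (G : Set (W ≃ᵃ[ℝ] W))
    (hG : ∀ π ∈ G, ∃ κ : E ≃ᵃⁱ[ℝ] E, κ '' Q = Q ∧
      ∀ y ∈ Q, p (κ y) = π (p y)) :
    HasSymmetricSubspaceExtension (Facet Q) (p '' Q) G := by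
  obtain ⟨p', hp'⟩ := exists_affineMap_comp_facetSlack p hp
  refine ⟨(affineSpan ℝ Q).map (facetSlack Q), p', ?_, fun π hπ => ?_⟩
  · rw [← image_facetSlack, image_image]
    exact image_congr hp'
  obtain ⟨κ, hκ, hpκ⟩ := hG π hπ
  refine ⟨facetPerm hκ, ?_, ?_⟩
  · rw [← image_facetSlack, image_image]
    simp_rw [← facetSlack_map hκ]
    rw [← image_image (facetSlack Q) κ, hκ]
  · rw [← image_facetSlack]
    rintro _ ⟨y, hy, rfl⟩
    rw [← facetSlack_map hκ, hp' _ (hκ ▸ mem_image_of_mem κ hy), hp' y hy, hpκ y hy]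

theorem hasSymmetricSubspaceExtension_polyhedron {W : Type*} [NormedAddCommGroup W]
    [NormedSpace ℝ W] (p : E →ᵃ[ℝ] W) (hp : Bornology.IsBounded (p '' Q))
    (G : Set (W ≃ᵃ[ℝ] W))
    (hG : ∀ π ∈ G, ∃ κ : E ≃ᵃⁱ[ℝ] E, κ '' Q = Q ∧
      ∀ y ∈ Q, p (κ y) = π (p y)) :
    HasSymmetricSubspaceExtension ι (p '' Q) G :=
  (hasSymmetricSubspaceExtension_facet p hp G hG).of_embedding nonempty_facet_embedding.some

end

end Polyhedron

section EuclideanSpace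

variable {d : ℕ}

lemma inner_toLp (v : Fin d → ℝ) (x : EuclideanSpace ℝ (Fin d)) :
    ⟪WithLp.toLp 2 v, x⟫ = ∑ j, v j * x j := by
  simp [EuclideanSpace.inner_eq_star_dotProduct, dotProduct, mul_comm]

lemma inner_toLpLin_toLpLin {U : Matrix (Fin d) (Fin d) ℝ} (hU : U * Uᵀ = 1)
    (x y : EuclideanSpace ℝ (Fin d)) :
    ⟪Matrix.toLpLin 2 2 U x, Matrix.toLpLin 2 2 U y⟫ = ⟪x, y⟫ := by
  simp only [Matrix.toLpLin_apply, EuclideanSpace.inner_eq_star_dotProduct, star_trivial]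
  rw [Matrix.dotProduct_mulVec, ← Matrix.mulVec_transpose, Matrix.mulVec_mulVec,
    mul_eq_one_comm.1 hU, Matrix.one_mulVec]

noncomputable def matrixAffineIsometry {U : Matrix (Fin d) (Fin d) ℝ} (hU : U * Uᵀ = 1)
    (u : Fin d → ℝ) : EuclideanSpace ℝ (Fin d) ≃ᵃⁱ[ℝ] EuclideanSpace ℝ (Fin d) :=
  ((LinearMap.isometryOfInner _ (inner_toLpLin_toLpLin hU)).toLinearIsometryEquiv
    rfl).toAffineIsometryEquiv.trans (AffineIsometryEquiv.constVAdd ℝ _ (WithLp.toLp 2 u))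

lemma ofLp_matrixAffineIsometry {U : Matrix (Fin d) (Fin d) ℝ} (hU : U * Uᵀ = 1)
    (u : Fin d → ℝ) (x : EuclideanSpace ℝ (Fin d)) :
    (matrixAffineIsometry hU u x).ofLp = U *ᵥ x.ofLp + u := by
  simp [matrixAffineIsometry, add_comm]

lemma image_matrixAffineIsometry_preimage_ofLp {U : Matrix (Fin d) (Fin d) ℝ} (hU : U * Uᵀ = 1)
    {u : Fin d → ℝ} {Q : Set (Fin d → ℝ)} (hQ : (fun y => U *ᵥ y + u) '' Q = Q) :
    matrixAffineIsometry hU u '' (WithLp.ofLp ⁻¹' Q) = WithLp.ofLp ⁻¹' Q := by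
  have hκ : ⇑(matrixAffineIsometry hU u) =
      WithLp.toLp 2 ∘ (fun y => U *ᵥ y + u) ∘ WithLp.ofLp := by
    funext x
    exact congrArg (WithLp.toLp 2) (ofLp_matrixAffineIsometry hU u x)
  rw [hκ, image_comp, image_comp, image_preimage_eq Q (WithLp.ofLp_surjective 2), hQ,
    image_eq_preimage_of_inverse (WithLp.ofLp_toLp 2) (WithLp.toLp_ofLp 2)]

end EuclideanSpace

end SymmetricExtension

open SymmetricExtension in
theorem statement1_general (m d f g : ℕ) (X : Finset (Fin m → ℝ)) (P : Set (Fin m → ℝ))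
    (hP : P = convexHull ℝ (X : Set (Fin m → ℝ)))
    (G : Subgroup ((Fin m → ℝ) ≃ᵃ[ℝ] (Fin m → ℝ)))
    (Aeq : Fin g → Fin d → ℝ) (beq : Fin g → ℝ)
    (A : Fin f → Fin d → ℝ) (b : Fin f → ℝ)
    (Q : Set (Fin d → ℝ))
    (hQ : Q = {y : Fin d → ℝ |
      (∀ i : Fin g, ∑ j, Aeq i j * y j = beq i) ∧ (∀ i : Fin f, ∑ j, A i j * y j ≤ b i)})
    (p : (Fin d → ℝ) →ᵃ[ℝ] (Fin m → ℝ)) (hproj : p '' Q = P)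
    -- isometry-symmetry of the extension `Q` with respect to `G`:
    (hsym : ∀ π ∈ G, ∃ (U : Matrix (Fin d) (Fin d) ℝ) (u : Fin d → ℝ),
      U * U.transpose = 1 ∧
      (fun y : Fin d → ℝ => U.mulVec y + u) '' Q = Q ∧
      ∀ y ∈ Q, p (U.mulVec y + u) = π (p y)) :
    -- conclusion: a coordinate-symmetric subspace extension of `P` in `ℝ^f`
    ∃ (V : AffineSubspace ℝ (Fin f → ℝ)) (p' : (Fin f → ℝ) →ᵃ[ℝ] (Fin m → ℝ)),
      p' '' {z : Fin f → ℝ | z ∈ V ∧ ∀ i, 0 ≤ z i} = P ∧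
      ∀ π ∈ G, ∃ σ : Equiv.Perm (Fin f),
        (fun z : Fin f → ℝ => (fun i => z (σ⁻¹ i))) ''
            {z : Fin f → ℝ | z ∈ V ∧ ∀ i, 0 ≤ z i}
          = {z : Fin f → ℝ | z ∈ V ∧ ∀ i, 0 ≤ z i} ∧
        ∀ z ∈ ({z : Fin f → ℝ | z ∈ V ∧ ∀ i, 0 ≤ z i} : Set (Fin f → ℝ)),
          p' (fun i => z (σ⁻¹ i)) = π (p' z) := by
  have hQ' : polyhedron (solutionSubspace (fun i => WithLp.toLp 2 (Aeq i)) beq)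
      (fun i => WithLp.toLp 2 (A i)) b = WithLp.ofLp ⁻¹' Q := by
    ext x
    simp [polyhedron, mem_solutionSubspace, hQ, inner_toLp]
  set p₁ := p.comp (WithLp.linearEquiv 2 ℝ (Fin d → ℝ)).toLinearMap.toAffineMap
  have hp₁ : p₁ '' (WithLp.ofLp ⁻¹' Q) = P := by
    rw [← hproj, show ⇑p₁ = p ∘ WithLp.ofLp from rfl, image_comp,
      image_preimage_eq Q (WithLp.ofLp_surjective 2)]
  have hbdd : Bornology.IsBounded (p₁ '' (WithLp.ofLp ⁻¹' Q)) := by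
    rw [hp₁, hP]
    exact (X.finite_toSet.isCompact_convexHull (𝕜 := ℝ)).isBounded
  rw [← hQ'] at hbdd
  have key := hasSymmetricSubspaceExtension_polyhedron (ι := Fin f) p₁ hbdd G fun π hπ => by
    obtain ⟨U, u, hU, hUQ, hUp⟩ := hsym π hπ
    refine ⟨matrixAffineIsometry hU u, hQ' ▸ image_matrixAffineIsometry_preimage_ofLp hU hUQ,
      fun y hy => ?_⟩
    rw [hQ'] at hy
    simpa [p₁, ofLp_matrixAffineIsometry] using hUp _ hy
  rwa [hQ', hp₁] at key

/-- If a polytope `P ⊆ ℝ^m` (invariant under a group `G` of affine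
transformations) has an isometry-symmetric extension whose polyhedron
`Q ⊆ ℝ^d` is described by a system of linear equations together with `f` linear
inequalities (in particular, if `Q` has `f` facets), then `P` also has a
coordinate-symmetric subspace extension `Q' = V ∩ ℝ₊^f ⊆ ℝ^f` (hence of size at
most `f`). -/
theorem statement1 (m d f g : ℕ) (X : Finset (Fin m → ℝ)) (P : Set (Fin m → ℝ))
    (hP : P = convexHull ℝ (X : Set (Fin m → ℝ)))
    (G : Subgroup ((Fin m → ℝ) ≃ᵃ[ℝ] (Fin m → ℝ)))
    (hGP : ∀ π ∈ G, (π : (Fin m → ℝ) → (Fin m → ℝ)) '' P = P)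
    (Aeq : Fin g → Fin d → ℝ) (beq : Fin g → ℝ)
    (A : Fin f → Fin d → ℝ) (b : Fin f → ℝ)
    (Q : Set (Fin d → ℝ))
    (hQ : Q = {y : Fin d → ℝ |
      (∀ i : Fin g, ∑ j, Aeq i j * y j = beq i) ∧ (∀ i : Fin f, ∑ j, A i j * y j ≤ b i)})
    (p : (Fin d → ℝ) →ᵃ[ℝ] (Fin m → ℝ)) (hproj : p '' Q = P)
    -- isometry-symmetry of the extension `Q` with respect to `G`:
    (hsym : ∀ π ∈ G, ∃ (U : Matrix (Fin d) (Fin d) ℝ) (u : Fin d → ℝ),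
      U * U.transpose = 1 ∧
      (fun y : Fin d → ℝ => U.mulVec y + u) '' Q = Q ∧
      ∀ y ∈ Q, p (U.mulVec y + u) = π (p y)) :
    -- conclusion: a coordinate-symmetric subspace extension of `P` in `ℝ^f`
    ∃ (V : AffineSubspace ℝ (Fin f → ℝ)) (p' : (Fin f → ℝ) →ᵃ[ℝ] (Fin m → ℝ)),
      p' '' {z : Fin f → ℝ | z ∈ V ∧ ∀ i, 0 ≤ z i} = P ∧
      ∀ π ∈ G, ∃ σ : Equiv.Perm (Fin f),
        (fun z : Fin f → ℝ => (fun i => z (σ⁻¹ i))) ''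
            {z : Fin f → ℝ | z ∈ V ∧ ∀ i, 0 ≤ z i}
          = {z : Fin f → ℝ | z ∈ V ∧ ∀ i, 0 ≤ z i} ∧
        ∀ z ∈ ({z : Fin f → ℝ | z ∈ V ∧ ∀ i, 0 ≤ z i} : Set (Fin f → ℝ)),
          p' (fun i => z (σ⁻¹ i)) = π (p' z) :=
  statement1_general m d f g X P hP G Aeq beq A b Q hQ p hproj hsym
end

section
/- Every coordinate-symmetric extension admits a coordinate-symmetric section. That is: let P ⊆ ℝ^m be a polytope with vertex set X, G a group of affine transformations of ℝ^m with π.P = P for all π ∈ G, and let Q ⊆ ℝ^d with affine projection p : ℝ^d → ℝ^m, p(Q) = P, be a coordinate-symmetric extension of P with respect to G. Then there exists a map s : X → Q with p(s(x)) = x for all x ∈ X such that for every π ∈ G there is a coordinate permutation κ_π of ℝ^d with s(π.x) = κ_π.s(x) for all x ∈ X. -/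
/-!
Choose in every fibre `Q ∩ p⁻¹(x)` its point of least Euclidean norm. The fibre is a nonempty
closed convex set, so this point exists and, the Euclidean norm being strictly convex, is unique.
A coordinate permutation `κ` realising `π` is a Euclidean isometry mapping the fibre over `x` onto
the fibre over `π x`, so it sends the minimiser over `x` to the minimiser over `π x`.
-/

open Set Function

section Polyhedron

variable {n ι ι' : Type*} [Fintype n] (Aeq : ι → n → ℝ) (beq : ι → ℝ) (A : ι' → n → ℝ)
  (b : ι' → ℝ)

theorem isClosed_polyhedron :
    IsClosed {y : n → ℝ | (∀ i, ∑ j, Aeq i j * y j = beq i) ∧ ∀ i, ∑ j, A i j * y j ≤ b i} := by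
  simp only [ofPred_and, ofPred_forall]
  exact (isClosed_iInter fun i => isClosed_eq (by fun_prop) continuous_const).inter
    (isClosed_iInter fun i => isClosed_le (by fun_prop) continuous_const)

theorem convex_polyhedron :
    Convex ℝ {y : n → ℝ | (∀ i, ∑ j, Aeq i j * y j = beq i) ∧ ∀ i, ∑ j, A i j * y j ≤ b i} := by
  have hlin (c : n → ℝ) : IsLinearMap ℝ fun y : n → ℝ => ∑ j, c j * y j :=
    (dotProductBilin ℝ ℝ c).isLinear
  simp only [ofPred_and, ofPred_forall]
  exact (convex_iInter fun i => convex_hyperplane (hlin (Aeq i)) _).inter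
    (convex_iInter fun i => convex_halfSpace_le (hlin (A i)) _)

end Polyhedron

section MinNorm

variable {E : Type*} [NormedAddCommGroup E] {K : Set E}

theorem IsClosed.exists_isMinOn_norm [ProperSpace E] (hK : IsClosed K) (hne : K.Nonempty) :
    ∃ v ∈ K, IsMinOn norm K v := by
  obtain ⟨v, hv, hdist⟩ := hK.exists_infDist_eq_dist hne 0
  refine ⟨v, hv, fun w hw => ?_⟩
  simpa [hdist] using Metric.infDist_le_dist_of_mem (x := 0) hw

theorem Convex.eq_of_isMinOn_norm [NormedSpace ℝ E] [StrictConvexSpace ℝ E] (hK : Convex ℝ K)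
    {v w : E} (hv : v ∈ K) (hw : w ∈ K) (hvmin : IsMinOn norm K v) (hwmin : IsMinOn norm K w) :
    v = w := by
  by_contra hne
  have hmid : (1 / 2 : ℝ) • v + (1 / 2 : ℝ) • w ∈ K :=
    hK hv hw (by norm_num) (by norm_num) (by norm_num)
  have hlt : ‖(1 / 2 : ℝ) • v + (1 / 2 : ℝ) • w‖ < ‖v‖ :=
    norm_combo_lt_of_ne le_rfl (hwmin hv) hne (by norm_num) (by norm_num) (by norm_num)
  exact (hvmin hmid).not_gt hlt

theorem ContinuousLinearEquiv.existsUnique_isMinOn_norm_comp {V : Type*} [AddCommGroup V]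
    [Module ℝ V] [TopologicalSpace V] [NormedSpace ℝ E] [ProperSpace E] [StrictConvexSpace ℝ E]
    (L : V ≃L[ℝ] E) {K : Set V} (hK : IsClosed K) (hconv : Convex ℝ K) (hne : K.Nonempty) :
    ∃! v, v ∈ K ∧ IsMinOn (‖L ·‖) K v := by
  have hLK : IsClosed (L '' K) := L.toHomeomorph.isClosedMap K hK
  have hconv' : Convex ℝ (L '' K) := hconv.linear_image (L : V →ₗ[ℝ] E)
  have hmin_iff (v : V) : IsMinOn (‖L ·‖) K v ↔ IsMinOn norm (L '' K) (L v) := by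
    simp only [isMinOn_iff, forall_mem_image]
  obtain ⟨_, ⟨v, hv, rfl⟩, hmin⟩ := hLK.exists_isMinOn_norm (hne.image L)
  refine ⟨v, ⟨hv, (hmin_iff v).2 hmin⟩, fun w ⟨hw, hwmin⟩ => L.injective ?_⟩
  exact hconv'.eq_of_isMinOn_norm (mem_image_of_mem L hw) (mem_image_of_mem L hv)
    ((hmin_iff w).1 hwmin) hmin

end MinNorm

theorem EuclideanSpace.norm_toLp_comp_perm {𝕜 ι : Type*} [RCLike 𝕜] [Fintype ι]
    (σ : Equiv.Perm ι) (y : ι → 𝕜) :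
    ‖WithLp.toLp 2 (fun j => y (σ⁻¹ j))‖ = ‖WithLp.toLp 2 y‖ := by
  simp only [EuclideanSpace.norm_eq]
  rw [Equiv.sum_comp σ⁻¹ (fun j => ‖y j‖ ^ 2)]

theorem IsMinOn.image_of_invariant {α β : Type*} [Preorder β] {f : α → β} {s : Set α} {a : α}
    {κ : α → α} (hf : ∀ y, f (κ y) = f y) (h : IsMinOn f s a) : IsMinOn f (κ '' s) (κ a) := by
  rintro _ ⟨y, hy, rfl⟩
  simpa only [mem_ofPred_eq, hf] using h hy

theorem image_inter_preimage_singleton_of_semiconj {Y Z : Type*} {Q : Set Y} {p : Y → Z}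
    {κ : Y → Y} {π : Z → Z} (hπ : Injective π) (hκQ : κ '' Q = Q)
    (hκp : ∀ y ∈ Q, p (κ y) = π (p y)) (x : Z) :
    κ '' (Q ∩ p ⁻¹' {x}) = Q ∩ p ⁻¹' {π x} := by
  ext u
  constructor
  · rintro ⟨y, ⟨hyQ, rfl⟩, rfl⟩
    exact ⟨hκQ ▸ mem_image_of_mem κ hyQ, hκp y hyQ⟩
  · rintro ⟨huQ, hpu⟩
    obtain ⟨z, hzQ, rfl⟩ := hκQ.symm ▸ huQ
    exact ⟨z, ⟨hzQ, hπ (by rw [← hκp z hzQ]; exact hpu)⟩, rfl⟩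

theorem statement2_general (m d g f : ℕ) (X : Finset (Fin m → ℝ)) (P : Set (Fin m → ℝ))
    (hP : P = convexHull ℝ (X : Set (Fin m → ℝ)))
    (G : Subgroup ((Fin m → ℝ) ≃ᵃ[ℝ] (Fin m → ℝ)))
    (Aeq : Fin g → Fin d → ℝ) (beq : Fin g → ℝ)
    (A : Fin f → Fin d → ℝ) (b : Fin f → ℝ)
    (Q : Set (Fin d → ℝ))
    (hQ : Q = {y : Fin d → ℝ |
      (∀ i : Fin g, ∑ j, Aeq i j * y j = beq i) ∧ (∀ i : Fin f, ∑ j, A i j * y j ≤ b i)})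
    (p : (Fin d → ℝ) →ᵃ[ℝ] (Fin m → ℝ)) (hproj : p '' Q = P)
    (hsym : ∀ π ∈ G, ∃ σ : Equiv.Perm (Fin d),
      (fun y : Fin d → ℝ => (fun j => y (σ⁻¹ j))) '' Q = Q ∧
      ∀ y ∈ Q, p (fun j => y (σ⁻¹ j)) = π (p y)) :
    ∃ s : (Fin m → ℝ) → (Fin d → ℝ),
      (∀ x ∈ X, s x ∈ Q ∧ p (s x) = x) ∧
      ∀ π ∈ G, ∃ σ : Equiv.Perm (Fin d),
        ∀ x ∈ X, s (π x) = fun j => s x (σ⁻¹ j) := by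
  have hQclosed : IsClosed Q := hQ ▸ isClosed_polyhedron Aeq beq A b
  have hQconvex : Convex ℝ Q := hQ ▸ convex_polyhedron Aeq beq A b
  have hmin (x : Fin m → ℝ) (hne : (Q ∩ p ⁻¹' {x}).Nonempty) :
      ∃! y, y ∈ Q ∩ p ⁻¹' {x} ∧ IsMinOn (‖WithLp.toLp 2 ·‖) (Q ∩ p ⁻¹' {x}) y :=
    (EuclideanSpace.equiv (Fin d) ℝ).symm.existsUnique_isMinOn_norm_comp
      (hQclosed.inter (isClosed_singleton.preimage p.continuous_of_finiteDimensional))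
      (hQconvex.inter ((convex_singleton x).affine_preimage p)) hne
  choose! s hs hs_unique using hmin
  have hfiber (x : Fin m → ℝ) (hx : x ∈ X) : (Q ∩ p ⁻¹' {x}).Nonempty := by
    obtain ⟨y, hyQ, hyx⟩ := (hproj.trans hP).symm ▸ subset_convexHull ℝ _ hx
    exact ⟨y, hyQ, hyx⟩
  refine ⟨s, fun x hx => (hs x (hfiber x hx)).1, fun π hπ => ?_⟩
  obtain ⟨σ, hσQ, hσp⟩ := hsym π hπ
  refine ⟨σ, fun x hx => ?_⟩
  obtain ⟨hsx, hsx_min⟩ := hs x (hfiber x hx)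
  have himage := image_inter_preimage_singleton_of_semiconj π.injective hσQ hσp x
  have hκsx : (fun j => s x (σ⁻¹ j)) ∈ Q ∩ p ⁻¹' {π x} := himage ▸ mem_image_of_mem _ hsx
  have hκsx_min : IsMinOn (‖WithLp.toLp 2 ·‖) (Q ∩ p ⁻¹' {π x}) fun j => s x (σ⁻¹ j) :=
    himage ▸ hsx_min.image_of_invariant (EuclideanSpace.norm_toLp_comp_perm σ)
  exact (hs_unique (π x) ⟨_, hκsx⟩ _ ⟨hκsx, hκsx_min⟩).symm

/-- Lemma 2.3.  Every coordinate-symmetric extension admits a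
coordinate-symmetric section.  Here `P = conv X ⊆ ℝ^m` is a polytope whose vertex set
is the finite set `X` (its set of extreme points), `G` is a group of affine
transformations of `ℝ^m` mapping `P` to itself, and `Q ⊆ ℝ^d` is a polyhedron
(described by linear equations and inequalities) with `p(Q) = P` for an affine map `p`,
such that the extension is coordinate-symmetric with respect to `G`: for each `π ∈ G`
there is a coordinate permutation `κ_π : y ↦ (y_{σ⁻¹ j})_j` with `κ_π.Q = Q` and
`p(κ_π y) = π.p(y)` on `Q`.  Then there is a section `s : X → Q` (i.e. `s x ∈ Q` and
`p (s x) = x`) such that for each `π ∈ G` there is a coordinate permutation with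
`s(π.x) = κ_π.s(x)` for all `x ∈ X`. -/
theorem statement2 (m d g f : ℕ) (X : Finset (Fin m → ℝ)) (P : Set (Fin m → ℝ))
    (hP : P = convexHull ℝ (X : Set (Fin m → ℝ)))
    (hX : (X : Set (Fin m → ℝ)) = Set.extremePoints ℝ P)
    (G : Subgroup ((Fin m → ℝ) ≃ᵃ[ℝ] (Fin m → ℝ)))
    (hGP : ∀ π ∈ G, (π : (Fin m → ℝ) → (Fin m → ℝ)) '' P = P)
    (Aeq : Fin g → Fin d → ℝ) (beq : Fin g → ℝ)
    (A : Fin f → Fin d → ℝ) (b : Fin f → ℝ)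
    (Q : Set (Fin d → ℝ))
    (hQ : Q = {y : Fin d → ℝ |
      (∀ i : Fin g, ∑ j, Aeq i j * y j = beq i) ∧ (∀ i : Fin f, ∑ j, A i j * y j ≤ b i)})
    (p : (Fin d → ℝ) →ᵃ[ℝ] (Fin m → ℝ)) (hproj : p '' Q = P)
    (hsym : ∀ π ∈ G, ∃ σ : Equiv.Perm (Fin d),
      (fun y : Fin d → ℝ => (fun j => y (σ⁻¹ j))) '' Q = Q ∧
      ∀ y ∈ Q, p (fun j => y (σ⁻¹ j)) = π (p y)) :
    ∃ s : (Fin m → ℝ) → (Fin d → ℝ),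
      (∀ x ∈ X, s x ∈ Q ∧ p (s x) = x) ∧
      ∀ π ∈ G, ∃ σ : Equiv.Perm (Fin d),
        ∀ x ∈ X, s (π x) = fun j => s x (σ⁻¹ j) :=
  statement2_general m d g f X P hP G Aeq beq A b Q hQ p hproj hsym
end

section
/- Let Q ⊆ ℝ^d be an extension of the polytope P ⊆ ℝ^m with affine projection p : ℝ^d → ℝ^m, and let the face P' of P be an extension of a polytope R ⊆ ℝ^k with affine projection q : ℝ^m → ℝ^k. Then Q' = p^{-1}(P') ∩ Q is a face of Q and is an extension of R via the composed projection q∘p : ℝ^d → ℝ^k. If moreover the extension Q of P is isometry-symmetric with respect to a group G, and H is a group of affine transformations of ℝ^k such that for every τ ∈ H one has τ.R = R and there is some π_τ ∈ G with π_τ.P' = P' and q(π_τ.x) = τ.q(x) for all x ∈ P', then the extension Q' of R is isometry-symmetric with respect to H. -/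
/-!
Pulling back the linear functional that cuts out `P'` along the affine map `p` gives an
affine functional on `ℝ^d`, i.e. a linear one up to a constant, whose maximizers over `Q` are
exactly `p⁻¹(P') ∩ Q`. Since `P' ⊆ P = p(Q)`, the image of `p⁻¹(P') ∩ Q` is `P'`, hence its
image under `q ∘ p` is `R`. Finally, the isometry `κ_π` that realizes `π = π_τ` on `Q`
preserves `p⁻¹(P') ∩ Q` because `π` is injective and fixes `P'`, and on this set
`q ∘ p ∘ κ_π = q ∘ π ∘ p = τ ∘ q ∘ p`.
-/

open scoped BigOperators

/-- A face of a subset of `ℝ^m`: the set of maximizers of a linear functional over it. -/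
def IsFaceOf {m : ℕ} (F P : Set (Fin m → ℝ)) : Prop :=
  ∃ c : Fin m → ℝ, F = {x ∈ P | ∀ y ∈ P, ∑ i, c i * y i ≤ ∑ i, c i * x i}

open Set Function Matrix

theorem Set.preimage_inter_setOf_isMax_image {α β γ : Type*} [LE γ] (p : α → β) (φ : β → γ)
    (Q : Set α) :
    p ⁻¹' {x ∈ p '' Q | ∀ y ∈ p '' Q, φ y ≤ φ x} ∩ Q =
      {y ∈ Q | ∀ z ∈ Q, φ (p z) ≤ φ (p y)} := by
  ext y
  simp only [mem_inter_iff, mem_preimage, mem_ofPred_eq, forall_mem_image]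
  exact ⟨fun ⟨⟨_, hmax⟩, hy⟩ => ⟨hy, hmax⟩, fun ⟨hy, hmax⟩ => ⟨⟨mem_image_of_mem p hy, hmax⟩, hy⟩⟩

theorem AffineMap.exists_dotProduct_add_const {ι : Type*} [Fintype ι] [DecidableEq ι]
    (φ : (ι → ℝ) →ᵃ[ℝ] ℝ) : ∃ c : ι → ℝ, ∀ y, φ y = c ⬝ᵥ y + φ 0 := by
  refine ⟨(dotProductEquiv ℝ ι).symm φ.linear, fun y => ?_⟩
  have hlin : (dotProductEquiv ℝ ι ((dotProductEquiv ℝ ι).symm φ.linear)) y = φ.linear y := by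
    rw [LinearEquiv.apply_symm_apply]
  rw [dotProductEquiv_apply_apply] at hlin
  rw [hlin]
  exact congrFun φ.decomp y

theorem IsFaceOf.subset {m : ℕ} {F P : Set (Fin m → ℝ)} (h : IsFaceOf F P) : F ⊆ P := by
  obtain ⟨c, rfl⟩ := h
  exact sep_subset _ _

theorem IsFaceOf.preimage_inter {d m : ℕ} (p : (Fin d → ℝ) →ᵃ[ℝ] (Fin m → ℝ))
    {F : Set (Fin m → ℝ)} {Q : Set (Fin d → ℝ)} (h : IsFaceOf F (p '' Q)) :
    IsFaceOf (p ⁻¹' F ∩ Q) Q := by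
  obtain ⟨c, rfl⟩ := h
  let φ : (Fin d → ℝ) →ᵃ[ℝ] ℝ := (dotProductEquiv ℝ (Fin m) c).toAffineMap.comp p
  obtain ⟨c', hc'⟩ := φ.exists_dotProduct_add_const
  refine ⟨c', (preimage_inter_setOf_isMax_image p (c ⬝ᵥ ·) Q).trans ?_⟩
  refine Set.ext fun y => and_congr_right fun _ => forall₂_congr fun z _ => ?_
  change φ z ≤ φ y ↔ c' ⬝ᵥ z ≤ c' ⬝ᵥ y
  rw [hc' z, hc' y, add_le_add_iff_right]

theorem Set.image_preimage_inter_eq_of_semiconj {α β : Type*} {κ : α → α} {p : α → β}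
    {π : β → β} (hπ : Injective π) {Q : Set α} {F : Set β} (hκQ : κ '' Q = Q)
    (hπF : π '' F = F) (hcomm : ∀ y ∈ Q, p (κ y) = π (p y)) :
    κ '' (p ⁻¹' F ∩ Q) = p ⁻¹' F ∩ Q := by
  ext z
  constructor
  · rintro ⟨y, ⟨hyF, hyQ⟩, rfl⟩
    refine ⟨?_, hκQ ▸ mem_image_of_mem κ hyQ⟩
    rw [mem_preimage, hcomm y hyQ, ← hπF]
    exact mem_image_of_mem π hyF
  · rintro ⟨hzF, hzQ⟩
    rw [← hκQ] at hzQ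
    obtain ⟨y, hyQ, rfl⟩ := hzQ
    rw [mem_preimage, hcomm y hyQ, ← hπF, hπ.mem_set_image] at hzF
    exact ⟨y, ⟨hzF, hyQ⟩, rfl⟩

theorem statement3_general (d m k : ℕ) (P : Set (Fin m → ℝ)) (Q : Set (Fin d → ℝ))
    (p : (Fin d → ℝ) →ᵃ[ℝ] (Fin m → ℝ)) (hproj : p '' Q = P)
    (P' : Set (Fin m → ℝ)) (hface : IsFaceOf P' P)
    (R : Set (Fin k → ℝ))
    (q : (Fin m → ℝ) →ᵃ[ℝ] (Fin k → ℝ)) (hq : q '' P' = R)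
    (G : Subgroup ((Fin m → ℝ) ≃ᵃ[ℝ] (Fin m → ℝ)))
    (hsym : ∀ π ∈ G, ∃ (U : Matrix (Fin d) (Fin d) ℝ) (u : Fin d → ℝ),
      U * U.transpose = 1 ∧
      (fun y : Fin d → ℝ => U.mulVec y + u) '' Q = Q ∧
      ∀ y ∈ Q, p (U.mulVec y + u) = π (p y))
    (H : Subgroup ((Fin k → ℝ) ≃ᵃ[ℝ] (Fin k → ℝ)))
    (hH : ∀ τ ∈ H, (τ : (Fin k → ℝ) → (Fin k → ℝ)) '' R = R ∧
      ∃ π ∈ G, (π : (Fin m → ℝ) → (Fin m → ℝ)) '' P' = P' ∧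
        ∀ x ∈ P', q (π x) = τ (q x)) :
    IsFaceOf (p ⁻¹' P' ∩ Q) Q ∧
    (q.comp p) '' (p ⁻¹' P' ∩ Q) = R ∧
    (∀ τ ∈ H, ∃ (U : Matrix (Fin d) (Fin d) ℝ) (u : Fin d → ℝ),
      U * U.transpose = 1 ∧
      (fun y : Fin d → ℝ => U.mulVec y + u) '' (p ⁻¹' P' ∩ Q) = p ⁻¹' P' ∩ Q ∧
      ∀ y ∈ p ⁻¹' P' ∩ Q, (q.comp p) (U.mulVec y + u) = τ ((q.comp p) y)) := by
  refine ⟨IsFaceOf.preimage_inter p (hproj ▸ hface), ?_, fun τ hτ => ?_⟩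
  · rw [AffineMap.coe_comp, image_comp, image_preimage_inter, hproj,
      inter_eq_left.2 hface.subset, hq]
  · obtain ⟨-, π, hπG, hπP', hπq⟩ := hH τ hτ
    obtain ⟨U, u, hU, hUQ, hUp⟩ := hsym π hπG
    refine ⟨U, u, hU, image_preimage_inter_eq_of_semiconj π.injective hUQ hπP' hUp,
      fun y hy => ?_⟩
    rw [AffineMap.comp_apply, AffineMap.comp_apply, hUp y hy.2, hπq _ hy.1]

/-- Let `Q ⊆ ℝ^d` be a (polyhedral) extension of the polytope
`P ⊆ ℝ^m` with projection `p`, and let the face `P'` of `P` be an extension of a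
polytope `R ⊆ ℝ^k` with projection `q`.  Then `Q' = p⁻¹(P') ∩ Q` is a face of `Q` and
an extension of `R` via `q ∘ p`.  Moreover, if the extension `Q` of `P` is
isometry-symmetric with respect to a group `G` and `H` is a group of affine
transformations of `ℝ^k` such that every `τ ∈ H` satisfies `τ.R = R` and admits some
`π_τ ∈ G` with `π_τ.P' = P'` and `q(π_τ x) = τ.q(x)` for `x ∈ P'`, then the extension
`Q'` of `R` is isometry-symmetric with respect to `H`. -/
theorem statement3 (d m k g f : ℕ)
    (XP : Finset (Fin m → ℝ)) (P : Set (Fin m → ℝ))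
    (hPpoly : P = convexHull ℝ (XP : Set (Fin m → ℝ)))
    (Aeq : Fin g → Fin d → ℝ) (beq : Fin g → ℝ)
    (A : Fin f → Fin d → ℝ) (b : Fin f → ℝ)
    (Q : Set (Fin d → ℝ))
    (hQ : Q = {y : Fin d → ℝ |
      (∀ i : Fin g, ∑ j, Aeq i j * y j = beq i) ∧ (∀ i : Fin f, ∑ j, A i j * y j ≤ b i)})
    (p : (Fin d → ℝ) →ᵃ[ℝ] (Fin m → ℝ)) (hproj : p '' Q = P)
    (P' : Set (Fin m → ℝ)) (hface : IsFaceOf P' P)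
    (XR : Finset (Fin k → ℝ)) (R : Set (Fin k → ℝ))
    (hRpoly : R = convexHull ℝ (XR : Set (Fin k → ℝ)))
    (q : (Fin m → ℝ) →ᵃ[ℝ] (Fin k → ℝ)) (hq : q '' P' = R)
    (G : Subgroup ((Fin m → ℝ) ≃ᵃ[ℝ] (Fin m → ℝ)))
    (hGP : ∀ π ∈ G, (π : (Fin m → ℝ) → (Fin m → ℝ)) '' P = P)
    (hsym : ∀ π ∈ G, ∃ (U : Matrix (Fin d) (Fin d) ℝ) (u : Fin d → ℝ),
      U * U.transpose = 1 ∧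
      (fun y : Fin d → ℝ => U.mulVec y + u) '' Q = Q ∧
      ∀ y ∈ Q, p (U.mulVec y + u) = π (p y))
    (H : Subgroup ((Fin k → ℝ) ≃ᵃ[ℝ] (Fin k → ℝ)))
    (hH : ∀ τ ∈ H, (τ : (Fin k → ℝ) → (Fin k → ℝ)) '' R = R ∧
      ∃ π ∈ G, (π : (Fin m → ℝ) → (Fin m → ℝ)) '' P' = P' ∧
        ∀ x ∈ P', q (π x) = τ (q x)) :
    IsFaceOf (p ⁻¹' P' ∩ Q) Q ∧
    (q.comp p) '' (p ⁻¹' P' ∩ Q) = R ∧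
    (∀ τ ∈ H, ∃ (U : Matrix (Fin d) (Fin d) ℝ) (u : Fin d → ℝ),
      U * U.transpose = 1 ∧
      (fun y : Fin d → ℝ => U.mulVec y + u) '' (p ⁻¹' P' ∩ Q) = p ⁻¹' P' ∩ Q ∧
      ∀ y ∈ p ⁻¹' P' ∩ Q, (q.comp p) (U.mulVec y + u) = τ ((q.comp p) y)) :=
  statement3_general d m k P Q p hproj P' hface R q hq G hsym H hH
end

section
/- There is a constant C > 0 such that for all integers n ≥ 2 and ℓ ≥ 1, the polytope P_match(ℓ,n) has an extension of size at most 2^{Cℓ} · n² · log₂ n; that is, there exist d ∈ ℕ, a polyhedron Q ⊆ ℝ^d described by a system of linear equations together with at most 2^{Cℓ} · n² · log₂ n linear inequalities, and an affine map p : ℝ^d → ℝ^{E_n} with p(Q) = P_match(ℓ,n). -/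
open scoped BigOperators
open Classical in
noncomputable section

/-- Edges of the complete graph `K_n` on the node set `Fin n`. -/
abbrev Edge (n : ℕ) := {e : Sym2 (Fin n) // ¬ e.IsDiag}

/-- A matching: a set of pairwise node-disjoint edges. -/
def IsMatching {n : ℕ} (M : Finset (Edge n)) : Prop :=
  ∀ e ∈ M, ∀ f ∈ M, e ≠ f → ∀ v : Fin n, ¬(v ∈ e.1 ∧ v ∈ f.1)

/-- Characteristic vector of a set of edges. -/
def charVec {n : ℕ} (M : Finset (Edge n)) : Edge n → ℝ :=
  fun e => if e ∈ M then 1 else 0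

/-- `P_match(ℓ,n)`: convex hull of characteristic vectors of size-`ℓ` matchings of `K_n`. -/
def matchingPolytope (n ℓ : ℕ) : Set (Edge n → ℝ) :=
  convexHull ℝ {x | ∃ M : Finset (Edge n), IsMatching M ∧ M.card = ℓ ∧ x = charVec M}

/-! Color coding. By the union bound, `T ≈ 4^{2ℓ} · 2ℓ · ln n` maps `[n] → [2ℓ]` suffice for
every `2ℓ`-set of vertices to be mapped injectively by one of them. For a fixed map `h`, the
`ℓ`-matchings whose vertices get distinct colors are exactly the edge sequences that add two
new colors at a time until all `2ℓ` colors are used, i.e. the source–sink paths of an acyclic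
network whose nodes record the set of colors used so far; it has `O(T · 2^{2ℓ} · n²)` arcs.
In an acyclic network the unit flows form the convex hull of the source–sink paths, so the
flow polytope, projected onto the edge labels of its arcs, is `P_match(ℓ, n)`, and it is cut out
by flow conservation and one nonnegativity inequality per arc. -/

open Finset
open scoped Matrix

namespace Network

variable {V A : Type*} {tl hd : A → V}

variable (tl hd) in
def IsWalk : V → List A → V → Prop
  | u, [], w => u = w
  | u, a :: l, w => tl a = u ∧ IsWalk (hd a) l w

lemma IsWalk.potential_le_tl (r : V → ℕ) (hr : ∀ a, r (tl a) < r (hd a)) {u w : V}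
    {l : List A} (h : IsWalk tl hd u l w) : ∀ a ∈ l, r u ≤ r (tl a) := by
  induction l generalizing u with
  | nil => simp
  | cons b l ih =>
    obtain ⟨rfl, h⟩ := h
    rintro a (_ | ⟨_, ha⟩)
    · rfl
    · exact (hr b).le.trans (ih h a ha)

lemma IsWalk.nodup (r : V → ℕ) (hr : ∀ a, r (tl a) < r (hd a)) {u w : V} {l : List A}
    (h : IsWalk tl hd u l w) : l.Nodup := by
  induction l generalizing u with
  | nil => simp
  | cons a l ih =>
    obtain ⟨rfl, h⟩ := h
    exact List.nodup_cons.mpr ⟨fun ha => (hr a).not_ge (h.potential_le_tl r hr a ha), ih h⟩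

section WalkVec

variable [DecidableEq A]

def walkVec (l : List A) : A → ℝ := fun a => (l.count a : ℝ)

lemma walkVec_nil : walkVec ([] : List A) = 0 := by
  ext; simp [walkVec]

lemma walkVec_cons (a : A) (l : List A) : walkVec (a :: l) = Pi.single a 1 + walkVec l := by
  ext b
  rcases eq_or_ne b a with rfl | h
  · simp [walkVec, add_comm]
  · simp [walkVec, h, Ne.symm h]

lemma walkVec_nonneg (l : List A) : 0 ≤ walkVec l := fun _ => Nat.cast_nonneg _

lemma walkVec_of_nodup {l : List A} (hl : l.Nodup) (a : A) :
    walkVec l a = if a ∈ l then 1 else 0 := by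
  split_ifs with h
  · simp [walkVec, List.count_eq_one_of_mem hl h]
  · simp [walkVec, List.count_eq_zero_of_not_mem h]

lemma sub_smul_walkVec_nonneg {l : List A} (hl : l.Nodup) {y : A → ℝ} (hy : 0 ≤ y) {c : ℝ}
    (hc : ∀ a ∈ l, c ≤ y a) : 0 ≤ y - c • walkVec l := fun a => by
  have hya : 0 ≤ y a := hy a
  simp only [Pi.zero_apply, Pi.sub_apply, Pi.smul_apply, smul_eq_mul, walkVec_of_nodup hl]
  split_ifs with ha
  · linarith [hc a ha]
  · linarith

end WalkVec

variable [Fintype A] [DecidableEq V]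

variable (tl hd) in
def incMatrix : Matrix V A ℝ :=
  Matrix.of fun v a => (Pi.single (tl a) 1 - Pi.single (hd a) 1 : V → ℝ) v

lemma sum_incMatrix_mulVec (W : Finset V) (y : A → ℝ) :
    ∑ v ∈ W, (incMatrix tl hd *ᵥ y) v =
      ∑ a, ((if tl a ∈ W then 1 else 0) - (if hd a ∈ W then 1 else 0)) * y a := by
  simp only [Matrix.mulVec, dotProduct, incMatrix, Matrix.of_apply, Pi.sub_apply, Pi.single_apply]
  rw [sum_comm]
  simp [sub_mul, sum_sub_distrib]

section WalkFlow

variable [DecidableEq A]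

lemma incMatrix_mulVec_single (a : A) :
    incMatrix tl hd *ᵥ Pi.single a 1 = Pi.single (tl a) 1 - Pi.single (hd a) 1 := by
  rw [Matrix.mulVec_single_one]; rfl

lemma IsWalk.incMatrix_mulVec {u w : V} {l : List A} (h : IsWalk tl hd u l w) :
    incMatrix tl hd *ᵥ walkVec l = Pi.single u 1 - Pi.single w 1 := by
  induction l generalizing u with
  | nil => cases h; simp [walkVec_nil]
  | cons a l ih =>
    obtain ⟨rfl, h⟩ := h
    rw [walkVec_cons, Matrix.mulVec_add, incMatrix_mulVec_single, ih h]
    abel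

lemma IsWalk.incMatrix_mulVec_sub_smul {s t : V} {l : List A} (hl : IsWalk tl hd s l t)
    {y : A → ℝ} (hflow : incMatrix tl hd *ᵥ y = Pi.single s 1 - Pi.single t 1) (c : ℝ) :
    incMatrix tl hd *ᵥ (y - c • walkVec l) = (1 - c) • (Pi.single s 1 - Pi.single t 1) := by
  rw [Matrix.mulVec_sub, Matrix.mulVec_smul, hflow, hl.incMatrix_mulVec, sub_smul, one_smul]

lemma card_support_smul_sub_smul_walkVec_lt {l : List A} (hl : l.Nodup) {y : A → ℝ}
    (hpos : ∀ a ∈ l, 0 < y a) {a₀ : A} (ha₀ : a₀ ∈ l) (c : ℝ) :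
    #{a | (c • (y - y a₀ • walkVec l)) a ≠ 0} < #{a | y a ≠ 0} := by
  have hsub : ({a | (c • (y - y a₀ • walkVec l)) a ≠ 0} : Finset A) ⊆
      ({a | y a ≠ 0} : Finset A) := by
    intro a
    simp only [mem_filter, mem_univ, true_and]
    intro ha hya
    have hal : a ∉ l := fun hal => (hpos a hal).ne' hya
    simp [walkVec_of_nodup hl, hal, hya] at ha
  refine card_lt_card ((ssubset_iff_of_subset hsub).mpr ⟨a₀, ?_, ?_⟩)
  · simpa using (hpos a₀ ha₀).ne'
  · simp [walkVec_of_nodup hl, ha₀]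

end WalkFlow

section Acyclic

variable [Fintype V]

/-- Sum the conservation law over an up-set of the potential: no arc leaves it, so no arc may
enter it either. -/
lemma eq_zero_of_incMatrix_mulVec_eq_zero (r : V → ℕ) (hr : ∀ a, r (tl a) < r (hd a))
    {z : A → ℝ} (hz : 0 ≤ z) (hcirc : incMatrix tl hd *ᵥ z = 0) : z = 0 := by
  ext a₀
  set W : Finset V := {v | r (hd a₀) ≤ r v}
  have hmem : ∀ v, v ∈ W ↔ r (hd a₀) ≤ r v := by simp [W]
  have hsum := sum_incMatrix_mulVec (tl := tl) (hd := hd) W z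
  simp only [hcirc, Pi.zero_apply, sum_const_zero] at hsum
  have hterm : ∀ a ∈ univ,
      ((if tl a ∈ W then (1 : ℝ) else 0) - (if hd a ∈ W then 1 else 0)) * z a ≤ 0 := by
    intro a _
    by_cases htl : tl a ∈ W
    · have hhd : hd a ∈ W := (hmem _).2 (((hmem _).1 htl).trans (hr a).le)
      simp [htl, hhd]
    · by_cases hhd : hd a ∈ W <;> simp [htl, hhd]; exact hz a
  have h₀ := (sum_eq_zero_iff_of_nonpos hterm).mp hsum.symm a₀ (mem_univ _)
  have htl : tl a₀ ∉ W := by simpa [hmem] using hr a₀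
  simpa [htl, (hmem _).2 le_rfl] using h₀

/-- Cut argument: the set `U` of vertices from which a positive walk reaches `t` receives no
flow from outside, so its net outflow is nonnegative; were `s ∉ U` it would be `-1`. -/
lemma exists_isWalk_forall_pos {s t : V} {y : A → ℝ} (hy : 0 ≤ y)
    (hflow : incMatrix tl hd *ᵥ y = Pi.single s 1 - Pi.single t 1) :
    ∃ l, IsWalk tl hd s l t ∧ ∀ a ∈ l, 0 < y a := by
  by_contra hs
  set U : Finset V := {u | ∃ l, IsWalk tl hd u l t ∧ ∀ a ∈ l, 0 < y a}
  have hmem : ∀ u, u ∈ U ↔ ∃ l, IsWalk tl hd u l t ∧ ∀ a ∈ l, 0 < y a := by simp [U]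
  have htU : t ∈ U := (hmem t).2 ⟨[], rfl, by simp⟩
  have hsU : s ∉ U := fun h => hs ((hmem s).1 h)
  have hclosed : ∀ a, 0 < y a → hd a ∈ U → tl a ∈ U := by
    intro a ha hU
    obtain ⟨l, hl, hpos⟩ := (hmem _).1 hU
    exact (hmem _).2 ⟨a :: l, ⟨rfl, hl⟩, by simpa [ha] using hpos⟩
  have hcut := sum_incMatrix_mulVec (tl := tl) (hd := hd) U y
  simp only [hflow, Pi.sub_apply, sum_sub_distrib, sum_pi_single', hsU, htU, if_true, if_false,
    zero_sub] at hcut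
  have hnonneg :
      0 ≤ ∑ a, ((if tl a ∈ U then (1 : ℝ) else 0) - (if hd a ∈ U then 1 else 0)) * y a := by
    refine sum_nonneg fun a _ => ?_
    by_cases htl : tl a ∈ U <;> by_cases hhd : hd a ∈ U
    · simp [htl, hhd]
    · simpa [htl, hhd] using hy a
    · have : y a = 0 := le_antisymm (not_lt.mp fun ha => htl (hclosed a ha hhd)) (hy a)
      simp [this]
    · simp [htl, hhd]
  linarith

variable [DecidableEq A]

/-- Peel off a positive walk with the largest weight it can carry: this empties an arc of the
walk, so induct on the support. -/
lemma mem_convexHull_of_unitFlow (r : V → ℕ) (hr : ∀ a, r (tl a) < r (hd a)) {s t : V}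
    (hst : s ≠ t) {y : A → ℝ} (hflow : incMatrix tl hd *ᵥ y = Pi.single s 1 - Pi.single t 1)
    (hy : 0 ≤ y) : y ∈ convexHull ℝ {x | ∃ l, IsWalk tl hd s l t ∧ x = walkVec l} := by
  induction hN : #{a | y a ≠ 0} using Nat.strong_induction_on generalizing y with
  | _ N ih =>
  obtain ⟨l, hl, hpos⟩ := exists_isWalk_forall_pos hy hflow
  have hnd := hl.nodup r hr
  have hwalk : walkVec l ∈ convexHull ℝ {x | ∃ l, IsWalk tl hd s l t ∧ x = walkVec l} :=
    subset_convexHull ℝ _ ⟨l, hl, rfl⟩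
  obtain ⟨a₀, ha₀, hmin⟩ : ∃ a₀ ∈ l, ∀ a ∈ l, y a₀ ≤ y a := by
    obtain ⟨a₀, ha₀, hmin⟩ := l.toFinset.exists_min_image y
      ((List.toFinset_nonempty_iff _).mpr fun h => hst (by subst h; exact hl))
    exact ⟨a₀, List.mem_toFinset.mp ha₀, fun a ha => hmin a (List.mem_toFinset.mpr ha)⟩
  set α := y a₀
  rcases lt_or_ge α 1 with hα | hα
  · have hα' : 0 < 1 - α := by linarith
    set y' := (1 - α)⁻¹ • (y - α • walkVec l)
    have hy'flow : incMatrix tl hd *ᵥ y' = Pi.single s 1 - Pi.single t 1 := by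
      rw [Matrix.mulVec_smul, hl.incMatrix_mulVec_sub_smul hflow, smul_smul,
        inv_mul_cancel₀ hα'.ne', one_smul]
    have hy' : 0 ≤ y' :=
      smul_nonneg (inv_nonneg.mpr hα'.le) (sub_smul_walkVec_nonneg hnd hy hmin)
    have hsupp : #{a | y' a ≠ 0} < N :=
      hN ▸ card_support_smul_sub_smul_walkVec_lt hnd hpos ha₀ _
    have hdecomp : y = α • walkVec l + (1 - α) • y' := by
      rw [smul_smul, mul_inv_cancel₀ hα'.ne', one_smul, add_sub_cancel]
    rw [hdecomp]
    exact convex_convexHull ℝ _ hwalk (ih _ hsupp hy'flow hy' rfl) (hpos a₀ ha₀).le hα'.le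
      (by ring)
  · have hrest : y - (1 : ℝ) • walkVec l = 0 :=
      eq_zero_of_incMatrix_mulVec_eq_zero r hr
        (sub_smul_walkVec_nonneg hnd hy fun a ha => hα.trans (hmin a ha))
        (by rw [hl.incMatrix_mulVec_sub_smul hflow, sub_self, zero_smul])
    rw [one_smul, sub_eq_zero] at hrest
    rwa [hrest]

theorem unitFlows_eq_convexHull (r : V → ℕ) (hr : ∀ a, r (tl a) < r (hd a)) {s t : V}
    (hst : s ≠ t) :
    {y : A → ℝ | incMatrix tl hd *ᵥ y = Pi.single s 1 - Pi.single t 1 ∧ 0 ≤ y} =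
      convexHull ℝ {x | ∃ l, IsWalk tl hd s l t ∧ x = walkVec l} := by
  refine subset_antisymm (fun y hy => mem_convexHull_of_unitFlow r hr hst hy.1 hy.2)
    (convexHull_min ?_ ?_)
  · rintro _ ⟨l, hl, rfl⟩
    exact ⟨hl.incMatrix_mulVec, walkVec_nonneg l⟩
  · exact ((convex_singleton _).linear_preimage (Matrix.mulVecLin _)).inter (convex_Ici 0)

end Acyclic

end Network

section PerfectHash

def IsPerfectHashFamily {ι α β : Type*} [Fintype β] (H : ι → α → β) : Prop :=
  ∀ S : Finset α, #S = Fintype.card β → ∃ i, Set.InjOn (H i) S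

/-- The union bound over `𝒮`, for `T` independent uniform samples from `F`. -/
lemma exists_tuple_forall_exists_good {σ F : Type*} [Fintype F] [Nonempty F]
    (𝒮 : Finset σ) (good : σ → F → Prop) [∀ S, DecidablePred (good S)] {q : ℝ}
    (hgood : ∀ S ∈ 𝒮, q * Fintype.card F ≤ #{f | good S f}) {T : ℕ}
    (hT : #𝒮 * (1 - q) ^ T < 1) :
    ∃ H : Fin T → F, ∀ S ∈ 𝒮, ∃ i, good S (H i) := by
  by_contra! hall
  set bad : σ → Finset (Fin T → F) := fun S => Fintype.piFinset fun _ => {f | ¬ good S f}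
  have hcover : (univ : Finset (Fin T → F)) ⊆ 𝒮.biUnion bad := fun H _ => by
    obtain ⟨S, hS, hH⟩ := hall H
    exact mem_biUnion.mpr ⟨S, hS, by simpa [bad] using hH⟩
  have hbad : ∀ S ∈ 𝒮, (#(bad S) : ℝ) ≤ ((1 - q) * Fintype.card F) ^ T := by
    intro S hS
    have hsplit := card_filter_add_card_filter_not (s := univ) fun f => good S f
    rw [card_univ] at hsplit
    have hcomp : (#{f | ¬ good S f} : ℝ) ≤ (1 - q) * Fintype.card F := by
      have hg := hgood S hS
      rw [← hsplit] at hg ⊢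
      push_cast at hg ⊢
      linarith
    simpa [bad, Fintype.card_piFinset] using pow_le_pow_left₀ (Nat.cast_nonneg _) hcomp T
  have hcount : (Fintype.card F : ℝ) ^ T ≤ #𝒮 * (1 - q) ^ T * (Fintype.card F : ℝ) ^ T :=
    calc (Fintype.card F : ℝ) ^ T = #(univ : Finset (Fin T → F)) := by simp
      _ ≤ #(𝒮.biUnion bad) := by exact_mod_cast card_le_card hcover
      _ ≤ ∑ S ∈ 𝒮, (#(bad S) : ℝ) := by exact_mod_cast card_biUnion_le
      _ ≤ ∑ _S ∈ 𝒮, ((1 - q) * Fintype.card F) ^ T := sum_le_sum hbad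
      _ = #𝒮 * (1 - q) ^ T * (Fintype.card F : ℝ) ^ T := by
        rw [sum_const, nsmul_eq_mul, mul_pow, mul_assoc]
  have hpos : (0 : ℝ) < (Fintype.card F : ℝ) ^ T := by positivity
  exact (hcount.trans_lt (mul_lt_of_lt_one_left hpos hT)).false

lemma factorial_mul_pow_le_card_injOn {α β : Type*} [Fintype α] [Fintype β] [DecidableEq α]
    [DecidableEq β] {S : Finset α} (hS : #S = Fintype.card β) :
    (Fintype.card β).factorial * Fintype.card β ^ (Fintype.card α - Fintype.card β) ≤
      #{f : α → β | Set.InjOn f S} := by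
  let glue : (S ↪ β) × ({x // x ∉ S} → β) → (α → β) := fun p =>
    (Equiv.piEquivPiSubtypeProd (· ∈ S) fun _ => β).symm (p.1, p.2)
  have hglue : ∀ p, Set.InjOn (glue p) S := fun p x hx y hy hxy => by
    rw [mem_coe] at hx hy
    simp only [glue, Equiv.piEquivPiSubtypeProd_symm_apply, dif_pos hx, dif_pos hy] at hxy
    exact congrArg Subtype.val (p.1.injective hxy)
  have hinj : Function.Injective fun p => (⟨glue p, hglue p⟩ : {f : α → β // Set.InjOn f S}) := by
    rintro ⟨g, h⟩ ⟨g', h'⟩ hgg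
    have := (Equiv.piEquivPiSubtypeProd (· ∈ S) fun _ => β).symm.injective
      (congrArg Subtype.val hgg)
    simp only [Prod.mk.injEq] at this
    exact Prod.ext (DFunLike.coe_injective this.1) this.2
  calc _ = Fintype.card ((S ↪ β) × ({x // x ∉ S} → β)) := by
        simp [Fintype.card_embedding_eq, hS, Nat.descFactorial_self, Fintype.card_subtype_compl]
    _ ≤ Fintype.card {f : α → β // Set.InjOn f S} := Fintype.card_le_of_injective _ hinj
    _ = _ := Fintype.card_subtype _

lemma pow_le_four_pow_mul_factorial (k : ℕ) : (k : ℝ) ^ k ≤ 4 ^ k * k.factorial := by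
  have h := Real.pow_div_factorial_le_exp (k : ℝ) (Nat.cast_nonneg k) k
  rw [div_le_iff₀ (by positivity)] at h
  calc (k : ℝ) ^ k ≤ Real.exp 1 ^ k * k.factorial := by rwa [← Real.exp_nat_mul, mul_one]
    _ ≤ 4 ^ k * k.factorial := by gcongr; linarith [Real.exp_one_lt_d9]

lemma pow_card_le_four_pow_mul_card_injOn {α β : Type*} [Fintype α] [Fintype β]
    [DecidableEq α] [DecidableEq β] {S : Finset α} (hS : #S = Fintype.card β) :
    (Fintype.card β : ℝ) ^ Fintype.card α ≤ 4 ^ Fintype.card β * #{f : α → β | Set.InjOn f S} := by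
  set k := Fintype.card β
  have hk : k ≤ Fintype.card α := hS ▸ card_le_univ S
  calc (k : ℝ) ^ Fintype.card α = (k : ℝ) ^ k * (k : ℝ) ^ (Fintype.card α - k) := by
        rw [← pow_add, Nat.add_sub_cancel' hk]
    _ ≤ 4 ^ k * k.factorial * (k : ℝ) ^ (Fintype.card α - k) := by
        gcongr; exact pow_le_four_pow_mul_factorial k
    _ ≤ 4 ^ k * #{f : α → β | Set.InjOn f S} := by
        rw [mul_assoc]; gcongr; exact_mod_cast factorial_mul_pow_le_card_injOn hS

lemma choose_mul_one_sub_inv_four_pow_pow_lt_one {n k T : ℕ} (hn : 0 < n)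
    (hT : 4 ^ k * k * Real.log n < T) : n.choose k * (1 - (4 ^ k : ℝ)⁻¹) ^ T < 1 := by
  set q : ℝ := (4 ^ k)⁻¹
  have hq1 : q ≤ 1 := inv_le_one_of_one_le₀ (one_le_pow₀ (by norm_num))
  have hlog : (k : ℝ) * Real.log n < q * T := by
    rw [lt_inv_mul_iff₀ (by positivity)]; linarith
  have hdecay : (1 - q) ^ T ≤ Real.exp (-(q * T)) := by
    rw [← neg_mul, mul_comm, Real.exp_nat_mul]
    exact pow_le_pow_left₀ (sub_nonneg.mpr hq1) (Real.one_sub_le_exp_neg q) T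
  calc (n.choose k : ℝ) * (1 - q) ^ T ≤ (n : ℝ) ^ k * Real.exp (-(q * T)) :=
        mul_le_mul (by exact_mod_cast Nat.choose_le_pow n k) hdecay
          (pow_nonneg (sub_nonneg.mpr hq1) T) (by positivity)
    _ < (n : ℝ) ^ k * Real.exp (-(k * Real.log n)) := by gcongr
    _ = 1 := by
        rw [Real.exp_neg, Real.exp_nat_mul, Real.exp_log (by exact_mod_cast hn),
          mul_inv_cancel₀ (by positivity)]

theorem exists_isPerfectHashFamily {n k T : ℕ} (hn : 0 < n) (hk : 0 < k)
    (hT : 4 ^ k * k * Real.log n < T) :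
    ∃ H : Fin T → Fin n → Fin k, IsPerfectHashFamily H := by
  have : Nonempty (Fin k) := ⟨⟨0, hk⟩⟩
  have hgood : ∀ S ∈ powersetCard k (univ : Finset (Fin n)),
      (4 ^ k : ℝ)⁻¹ * Fintype.card (Fin n → Fin k) ≤ #{f : Fin n → Fin k | Set.InjOn f S} := by
    intro S hS
    rw [inv_mul_le_iff₀ (by positivity)]
    simpa using pow_card_le_four_pow_mul_card_injOn (α := Fin n) (β := Fin k)
      (by simpa using (mem_powersetCard.mp hS).2)
  have hunion : #(powersetCard k (univ : Finset (Fin n))) * (1 - (4 ^ k : ℝ)⁻¹) ^ T < 1 := by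
    simpa using choose_mul_one_sub_inv_four_pow_pow_lt_one hn hT
  obtain ⟨H, hH⟩ := exists_tuple_forall_exists_good _
    (fun (S : Finset (Fin n)) (f : Fin n → Fin k) => Set.InjOn f S) hgood hunion
  exact ⟨H, fun S hS => hH S (mem_powersetCard.mpr ⟨subset_univ S, by simpa using hS⟩)⟩

end PerfectHash

section Colors

variable {n k : ℕ}

def colors (f : Fin n → Fin k) (e : Edge n) : Finset (Fin k) := e.1.toFinset.image f

structure CompletesColors (f : Fin n → Fin k) (S : Finset (Fin k)) (M : Finset (Edge n)) :
    Prop where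
  card_colors : ∀ e ∈ M, #(colors f e) = 2
  pairwiseDisjoint : (M : Set (Edge n)).PairwiseDisjoint (colors f)
  disjoint : Disjoint S (M.biUnion (colors f))
  union_eq : S ∪ M.biUnion (colors f) = univ

variable {f : Fin n → Fin k} {S : Finset (Fin k)} {M : Finset (Edge n)} {e : Edge n}

lemma mem_colors_of_mem {v : Fin n} (hv : v ∈ e.1) : f v ∈ colors f e :=
  mem_image_of_mem f (Sym2.mem_toFinset.mpr hv)

lemma charVec_empty : charVec (∅ : Finset (Edge n)) = 0 := by
  ext; simp [charVec]

lemma charVec_insert (he : e ∉ M) : charVec (insert e M) = Pi.single e 1 + charVec M := by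
  ext e'
  rcases eq_or_ne e' e with rfl | hne
  · simp [charVec, he]
  · simp [charVec, hne]

lemma completesColors_empty_iff : CompletesColors f S ∅ ↔ S = univ :=
  ⟨fun h => by simpa using h.union_eq, fun h => ⟨by simp, by simp, by simp, by simp [h]⟩⟩

lemma completesColors_insert_iff (he : e ∉ M) :
    CompletesColors f S (insert e M) ↔
      #(colors f e) = 2 ∧ Disjoint S (colors f e) ∧ CompletesColors f (S ∪ colors f e) M := by
  constructor
  · intro h
    have hdisj := h.disjoint
    have hpw := h.pairwiseDisjoint
    rw [biUnion_insert, disjoint_union_right] at hdisj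
    rw [coe_insert, Set.pairwiseDisjoint_insert] at hpw
    refine ⟨h.card_colors e (mem_insert_self e M), hdisj.1,
      fun e' he' => h.card_colors e' (mem_insert_of_mem he'), hpw.1, ?_, ?_⟩
    · refine disjoint_union_left.mpr ⟨hdisj.2, (disjoint_biUnion_right _ _ _).mpr fun e' he' => ?_⟩
      exact hpw.2 e' he' (ne_of_mem_of_not_mem he' he).symm
    · rw [union_assoc, ← biUnion_insert]; exact h.union_eq
  · rintro ⟨hcard, hS, h⟩
    refine ⟨(forall_mem_insert _ _ _).mpr ⟨hcard, h.card_colors⟩, ?_, ?_, ?_⟩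
    · rw [coe_insert, Set.pairwiseDisjoint_insert]
      exact ⟨h.pairwiseDisjoint, fun e' he' _ =>
        (disjoint_biUnion_right _ _ _).mp (h.disjoint.mono_left subset_union_right) e' he'⟩
    · rw [biUnion_insert, disjoint_union_right]
      exact ⟨hS, h.disjoint.mono_left subset_union_left⟩
    · rw [biUnion_insert, ← union_assoc]; exact h.union_eq

lemma CompletesColors.notMem (h : CompletesColors f (S ∪ colors f e) M)
    (he : #(colors f e) = 2) : e ∉ M := by
  intro heM
  have hsub : colors f e ⊆ M.biUnion (colors f) := subset_biUnion_of_mem _ heM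
  have : Disjoint (colors f e) (colors f e) :=
    (h.disjoint.mono_left subset_union_right).mono_right hsub
  simp [disjoint_self.mp this] at he

lemma CompletesColors.isMatching (h : CompletesColors f S M) : IsMatching M :=
  fun _ he _ he' hne _ hv =>
    disjoint_left.mp (h.pairwiseDisjoint he he' hne) (mem_colors_of_mem hv.1)
      (mem_colors_of_mem hv.2)

lemma CompletesColors.card_add_two_mul_card (h : CompletesColors f S M) : #S + 2 * #M = k := by
  have := congrArg card h.union_eq
  rwa [card_union_of_disjoint h.disjoint, card_biUnion h.pairwiseDisjoint,
    sum_congr rfl h.card_colors, sum_const, smul_eq_mul, mul_comm, card_univ,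
    Fintype.card_fin] at this

lemma IsMatching.pairwiseDisjoint_toFinset (hM : IsMatching M) :
    (M : Set (Edge n)).PairwiseDisjoint fun e => e.1.toFinset :=
  fun e he e' he' hne => disjoint_left.mpr fun v hv hv' =>
    hM e he e' he' hne v ⟨Sym2.mem_toFinset.mp hv, Sym2.mem_toFinset.mp hv'⟩

lemma IsMatching.card_biUnion_toFinset (hM : IsMatching M) :
    #(M.biUnion fun e => e.1.toFinset) = 2 * #M := by
  rw [card_biUnion hM.pairwiseDisjoint_toFinset,
    sum_congr rfl fun e _ => Sym2.card_toFinset_of_not_isDiag e.1 e.2, sum_const, smul_eq_mul,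
    mul_comm]

lemma IsMatching.completesColors (hM : IsMatching M) (hk : 2 * #M = k)
    (hf : Set.InjOn f (M.biUnion fun e => e.1.toFinset)) : CompletesColors f ∅ M := by
  have hinj : ∀ e ∈ M, Set.InjOn f e.1.toFinset := fun e he =>
    hf.mono (coe_subset.mpr (subset_biUnion_of_mem (fun e : Edge n => e.1.toFinset) he))
  have hcard : ∀ e ∈ M, #(colors f e) = 2 := fun e he => by
    rw [colors, card_image_of_injOn (hinj e he), Sym2.card_toFinset_of_not_isDiag e.1 e.2]
  have hdisj : (M : Set (Edge n)).PairwiseDisjoint (colors f) := by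
    intro e he e' he' hne
    rw [Function.onFun, disjoint_left]
    rintro _ hx hx'
    obtain ⟨v, hv, rfl⟩ := mem_image.mp hx
    obtain ⟨w, hw, hvw⟩ := mem_image.mp hx'
    have hmem : ∀ e ∈ M, ∀ u ∈ e.1.toFinset, u ∈ M.biUnion fun e => e.1.toFinset :=
      fun e he u hu => mem_biUnion.mpr ⟨e, he, hu⟩
    obtain rfl := hf (hmem _ he' _ hw) (hmem _ he _ hv) hvw
    exact hM e he e' he' hne w ⟨Sym2.mem_toFinset.mp hv, Sym2.mem_toFinset.mp hw⟩
  refine ⟨hcard, hdisj, disjoint_empty_left _, ?_⟩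
  rw [empty_union]
  refine eq_univ_of_card _ ?_
  rw [card_biUnion hdisj, sum_congr rfl hcard, sum_const, smul_eq_mul, Fintype.card_fin, ← hk,
    mul_comm]

lemma setOf_completesColors_eq {ι : Type*} {n ℓ : ℕ} {H : ι → Fin n → Fin (2 * ℓ)}
    (hH : IsPerfectHashFamily H) :
    {x | ∃ i M, CompletesColors (H i) ∅ M ∧ x = charVec M} =
      {x | ∃ M : Finset (Edge n), IsMatching M ∧ #M = ℓ ∧ x = charVec M} := by
  ext x
  constructor
  · rintro ⟨i, M, hM, rfl⟩
    have := hM.card_add_two_mul_card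
    exact ⟨M, hM.isMatching, by simp at this; omega, rfl⟩
  · rintro ⟨M, hM, hcard, rfl⟩
    obtain ⟨i, hi⟩ := hH _ (by rw [hM.card_biUnion_toFinset, hcard, Fintype.card_fin])
    exact ⟨i, M, hM.completesColors (by rw [hcard]) hi, rfl⟩

end Colors

namespace MatchingNetwork

variable {n k T : ℕ}

abbrev Node (k T : ℕ) := Bool ⊕ (Fin T × Finset (Fin k))

def source : Node k T := .inl false

def sink : Node k T := .inl true

def layer (i : Fin T) (S : Finset (Fin k)) : Node k T := .inr (i, S)

variable (H : Fin T → Fin n → Fin k)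

abbrev Step :=
  {p : Fin T × Finset (Fin k) × Edge n //
    #(colors (H p.1) p.2.2) = 2 ∧ Disjoint p.2.1 (colors (H p.1) p.2.2)}

abbrev Arc := Fin T ⊕ Step H ⊕ Fin T

def tl : Arc H → Node k T
  | .inl _ => source
  | .inr (.inl p) => layer p.1.1 p.1.2.1
  | .inr (.inr i) => layer i univ

def hd : Arc H → Node k T
  | .inl i => layer i ∅
  | .inr (.inl p) => layer p.1.1 (p.1.2.1 ∪ colors (H p.1.1) p.1.2.2)
  | .inr (.inr _) => sink

def arcVec : Arc H → Edge n → ℝ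
  | .inr (.inl p) => Pi.single p.1.2.2 1
  | _ => 0

def potential : Node k T → ℕ
  | .inl false => 0
  | .inl true => k + 2
  | .inr (_, S) => #S + 1

lemma potential_tl_lt_hd (a : Arc H) : potential (tl H a) < potential (hd H a) := by
  rcases a with i | ⟨⟨i, S, e⟩, hcard, hdisj⟩ | i
  · simp [tl, hd, source, layer, potential]
  · simp [tl, hd, layer, potential, card_union_of_disjoint hdisj, hcard]
  · simp [tl, hd, layer, sink, potential]

open Network

def proj : (Arc H → ℝ) →ₗ[ℝ] Edge n → ℝ := Fintype.linearCombination ℝ (arcVec H)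

lemma proj_walkVec (l : List (Arc H)) : proj H (walkVec l) = (l.map (arcVec H)).sum := by
  induction l with
  | nil => simp [walkVec_nil]
  | cons a l ih => simp [walkVec_cons, proj, ← ih]

lemma isWalk_sink_eq_nil {l : List (Arc H)} (h : IsWalk (tl H) (hd H) sink l sink) : l = [] := by
  rcases l with _ | ⟨i | p | i, l⟩
  · rfl
  all_goals simp [IsWalk, tl, source, sink, layer] at h

lemma exists_completesColors_of_isWalk {i : Fin T} {S : Finset (Fin k)} {l : List (Arc H)}
    (h : IsWalk (tl H) (hd H) (layer i S) l sink) :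
    ∃ M, CompletesColors (H i) S M ∧ (l.map (arcVec H)).sum = charVec M := by
  induction l generalizing S with
  | nil => simp [IsWalk, layer, sink] at h
  | cons a l ih =>
    obtain ⟨htl, h⟩ := h
    rcases a with j | ⟨⟨j, S', e⟩, hcard, hdisj⟩ | j
    · simp [tl, source, layer] at htl
    · obtain ⟨rfl, rfl⟩ : j = i ∧ S' = S := by simpa [tl, layer] using htl
      obtain ⟨M, hM, hsum⟩ := ih h
      have he := hM.notMem hcard
      exact ⟨insert e M, (completesColors_insert_iff he).mpr ⟨hcard, hdisj, hM⟩,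
        by simp [arcVec, hsum, charVec_insert he]⟩
    · obtain ⟨rfl, rfl⟩ : j = i ∧ univ = S := by simpa [tl, layer] using htl
      obtain rfl := isWalk_sink_eq_nil H h
      exact ⟨∅, completesColors_empty_iff.mpr rfl, by simp [arcVec, charVec_empty]⟩

lemma exists_isWalk_of_completesColors {i : Fin T} {S : Finset (Fin k)} {M : Finset (Edge n)}
    (hM : CompletesColors (H i) S M) :
    ∃ l, IsWalk (tl H) (hd H) (layer i S) l sink ∧ (l.map (arcVec H)).sum = charVec M := by
  induction M using Finset.induction_on generalizing S with
  | empty =>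
    obtain rfl := completesColors_empty_iff.mp hM
    exact ⟨[.inr (.inr i)], ⟨rfl, rfl⟩, by simp [arcVec, charVec_empty]⟩
  | insert e M he ih =>
    obtain ⟨hcard, hdisj, hM⟩ := (completesColors_insert_iff he).mp hM
    obtain ⟨l, hl, hsum⟩ := ih hM
    exact ⟨.inr (.inl ⟨(i, S, e), hcard, hdisj⟩) :: l, ⟨rfl, hl⟩,
      by simp [arcVec, hsum, charVec_insert he]⟩

lemma proj_image_walkVec :
    proj H '' {x | ∃ l, IsWalk (tl H) (hd H) source l sink ∧ x = walkVec l} =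
      {x | ∃ i M, CompletesColors (H i) ∅ M ∧ x = charVec M} := by
  ext x
  simp only [Set.mem_image]
  constructor
  · rintro ⟨_, ⟨_ | ⟨i | p | i, l⟩, hl, rfl⟩, rfl⟩
    all_goals simp [IsWalk, tl, source, sink, layer] at hl
    obtain ⟨M, hM, hsum⟩ := exists_completesColors_of_isWalk H hl
    exact ⟨i, M, hM, by simp [proj_walkVec, arcVec, hsum]⟩
  · rintro ⟨i, M, hM, rfl⟩
    obtain ⟨l, hl, hsum⟩ := exists_isWalk_of_completesColors H hM
    exact ⟨_, ⟨.inl i :: l, ⟨rfl, hl⟩, rfl⟩, by simp [proj_walkVec, arcVec, hsum]⟩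

lemma card_arc_le : Fintype.card (Arc H) ≤ T * (2 ^ k * n ^ 2 + 2) := by
  have hedge : Fintype.card (Edge n) ≤ n ^ 2 := by
    calc Fintype.card (Edge n) = n.choose 2 := by convert Sym2.card_subtype_not_diag; simp
      _ ≤ n ^ 2 := Nat.choose_le_pow n 2
  have hstep : Fintype.card (Step H) ≤ T * (2 ^ k * n ^ 2) := by
    refine (Fintype.card_subtype_le _).trans ?_
    simp only [Fintype.card_prod, Fintype.card_fin, Fintype.card_finset]
    gcongr
  simp only [Fintype.card_sum, Fintype.card_fin]
  rw [mul_add]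
  omega

end MatchingNetwork

lemma exists_fin_presentation {ι κ E : Type*} [Fintype ι] [Fintype κ] [AddCommGroup E]
    [Module ℝ E] (B : Matrix ι κ ℝ) (c : ι → ℝ) (π : (κ → ℝ) →ₗ[ℝ] E) :
    ∃ (d g : ℕ) (Aeq : Fin g → Fin d → ℝ) (beq : Fin g → ℝ)
      (A : Fin (Fintype.card κ) → Fin d → ℝ) (b : Fin (Fintype.card κ) → ℝ)
      (p : (Fin d → ℝ) →ᵃ[ℝ] E),
      p '' {y | (∀ i, ∑ j, Aeq i j * y j = beq i) ∧ ∀ i, ∑ j, A i j * y j ≤ b i} =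
        π '' {y | B *ᵥ y = c ∧ 0 ≤ y} := by
  set eκ := Fintype.equivFin κ
  set eι := Fintype.equivFin ι
  set φ : (Fin (Fintype.card κ) → ℝ) ≃ₗ[ℝ] (κ → ℝ) := LinearEquiv.funCongrLeft ℝ ℝ eκ
  refine ⟨_, _, fun i j => B (eι.symm i) (eκ.symm j), fun i => c (eι.symm i),
    fun i j => if i = j then -1 else 0, 0, (π ∘ₗ φ.toLinearMap).toAffineMap, ?_⟩
  have hpre : {y | (∀ i, ∑ j, B (eι.symm i) (eκ.symm j) * y j = c (eι.symm i)) ∧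
      ∀ i, ∑ j, (if i = j then (-1 : ℝ) else 0) * y j ≤ (0 : Fin _ → ℝ) i} =
      φ ⁻¹' {y | B *ᵥ y = c ∧ 0 ≤ y} := by
    ext y
    simp only [Set.mem_ofPred_eq, Set.mem_preimage, funext_iff, Pi.le_def]
    refine and_congr (eι.symm.forall_congr fun i => ?_) (eκ.symm.forall_congr fun j => ?_)
    · simp [φ, Matrix.mulVec, dotProduct, ← eκ.symm.sum_comp]
    · simp [φ]
  rw [LinearMap.coe_toAffineMap, LinearMap.coe_comp, Set.image_comp, hpre,
    LinearEquiv.coe_coe, Set.image_preimage_eq _ φ.surjective]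

lemma eight_mul_mul_sixtyFour_pow_le {ℓ : ℕ} (hℓ : 1 ≤ ℓ) : 8 * ℓ * 64 ^ ℓ ≤ 2 ^ (10 * ℓ) := by
  have h : 8 * ℓ ≤ 16 ^ ℓ :=
    calc 8 * ℓ ≤ 2 ^ (ℓ + 3) := by rw [pow_add]; linarith [ℓ.lt_two_pow_self]
      _ ≤ 2 ^ (4 * ℓ) := Nat.pow_le_pow_right (by norm_num) (by omega)
      _ = 16 ^ ℓ := by rw [pow_mul]; norm_num
  calc 8 * ℓ * 64 ^ ℓ ≤ 16 ^ ℓ * 64 ^ ℓ := by gcongr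
    _ = 2 ^ (10 * ℓ) := by rw [← mul_pow, pow_mul]; norm_num

lemma mul_two_pow_mul_sq_add_two_le {n ℓ T : ℕ} (hn : 2 ≤ n) (hℓ : 1 ≤ ℓ)
    (hT : (T : ℝ) ≤ 4 ^ (2 * ℓ) * (2 * ℓ : ℕ) * Real.log n + 1) :
    ((T * (2 ^ (2 * ℓ) * n ^ 2 + 2) : ℕ) : ℝ) ≤ 2 ^ ((10 : ℝ) * ℓ) * n ^ 2 * Real.logb 2 n := by
  set L := Real.logb 2 n with hLdef
  have hL : 1 ≤ L := by
    rw [← Real.logb_self_eq_one (b := 2) (by norm_num)]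
    exact Real.logb_le_logb_of_le (by norm_num) (by norm_num) (by exact_mod_cast hn)
  have hlog : Real.log n ≤ L := by
    rw [hLdef, ← Real.log_div_log, le_div_iff₀ (Real.log_pos (by norm_num))]
    have := Real.log_two_lt_d9
    nlinarith [Real.log_nonneg (by exact_mod_cast (by omega : 1 ≤ n) : (1 : ℝ) ≤ n)]
  have hc : (1 : ℝ) ≤ 16 ^ ℓ * (2 * ℓ) := by
    have : (1 : ℝ) ≤ 16 ^ ℓ := one_le_pow₀ (by norm_num)
    have : (1 : ℝ) ≤ ℓ := by exact_mod_cast hℓ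
    nlinarith
  have hT' : (T : ℝ) ≤ 4 * ℓ * 16 ^ ℓ * L := by
    have h16 : (4 : ℝ) ^ (2 * ℓ) = 16 ^ ℓ := by rw [pow_mul]; norm_num
    rw [h16] at hT
    push_cast at hT
    nlinarith
  have hwidth : (2 : ℝ) ^ (2 * ℓ) * n ^ 2 + 2 ≤ 2 * 4 ^ ℓ * n ^ 2 := by
    have h4 : (2 : ℝ) ^ (2 * ℓ) = 4 ^ ℓ := by rw [pow_mul]; norm_num
    have : (2 : ℝ) ≤ 4 ^ ℓ * n ^ 2 := by
      have : (1 : ℝ) ≤ 4 ^ ℓ := one_le_pow₀ (by norm_num)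
      have : (2 : ℝ) ≤ n := by exact_mod_cast hn
      nlinarith
    rw [h4]; linarith
  have hconst : (8 * ℓ * 64 ^ ℓ : ℝ) ≤ 2 ^ (10 * ℓ) := by
    exact_mod_cast eight_mul_mul_sixtyFour_pow_le hℓ
  rw [show (10 : ℝ) * ℓ = ((10 * ℓ : ℕ) : ℝ) by push_cast; ring, Real.rpow_natCast]
  push_cast
  calc (T : ℝ) * (2 ^ (2 * ℓ) * n ^ 2 + 2) ≤ (4 * ℓ * 16 ^ ℓ * L) * (2 * 4 ^ ℓ * n ^ 2) := by
        gcongr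
    _ = 8 * ℓ * (16 * 4) ^ ℓ * n ^ 2 * L := by rw [mul_pow]; ring
    _ ≤ 2 ^ (10 * ℓ) * n ^ 2 * L := by norm_num; gcongr

open MatchingNetwork Network in
/-- Theorem 4.1.  There is a constant `C > 0` such that for all
`n ≥ 2` and `ℓ ≥ 1` the polytope `P_match(ℓ,n)` has an extension of size at most
`2^{Cℓ}·n²·log₂ n`:  a polyhedron `Q ⊆ ℝ^d` described by linear equations together with
`f ≤ 2^{Cℓ}·n²·log₂ n` linear inequalities, and an affine map `p` with
`p(Q) = P_match(ℓ,n)`. -/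
theorem statement11 :
    ∃ C : ℝ, 0 < C ∧
      ∀ n ℓ : ℕ, 2 ≤ n → 1 ≤ ℓ →
        ∃ (d g f : ℕ) (Aeq : Fin g → Fin d → ℝ) (beq : Fin g → ℝ)
          (A : Fin f → Fin d → ℝ) (b : Fin f → ℝ)
          (p : (Fin d → ℝ) →ᵃ[ℝ] (Edge n → ℝ)),
          (f : ℝ) ≤ (2 : ℝ) ^ (C * ℓ) * (n : ℝ) ^ 2 * Real.logb 2 (n : ℝ) ∧
          p '' {y : Fin d → ℝ |
              (∀ i : Fin g, ∑ j, Aeq i j * y j = beq i) ∧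
              (∀ i : Fin f, ∑ j, A i j * y j ≤ b i)} = matchingPolytope n ℓ := by
  refine ⟨10, by norm_num, fun n ℓ hn hℓ => ?_⟩
  set x : ℝ := 4 ^ (2 * ℓ) * (2 * ℓ : ℕ) * Real.log n
  have hx : 0 ≤ x := by
    have := Real.log_nonneg (by exact_mod_cast (by omega : 1 ≤ n) : (1 : ℝ) ≤ n)
    positivity
  obtain ⟨H, hH⟩ := exists_isPerfectHashFamily (n := n) (k := 2 * ℓ) (T := ⌊x⌋₊ + 1)
    (by omega) (by omega) (by rw [Nat.cast_add, Nat.cast_one]; exact Nat.lt_floor_add_one x)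
  obtain ⟨d, g, Aeq, beq, A, b, p, hp⟩ := exists_fin_presentation (incMatrix (tl H) (hd H))
    (Pi.single source 1 - Pi.single sink 1) (proj H)
  refine ⟨d, g, _, Aeq, beq, A, b, p, ?_, ?_⟩
  · refine le_trans (by exact_mod_cast card_arc_le H) (mul_two_pow_mul_sq_add_two_le hn hℓ ?_)
    rw [Nat.cast_add, Nat.cast_one]
    exact add_le_add_left (Nat.floor_le hx) 1
  · rw [hp, unitFlows_eq_convexHull potential (potential_tl_lt_hd H) (by simp [source, sink]),
      LinearMap.image_convexHull, proj_image_walkVec, setOf_completesColors_eq hH]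
    rfl

end
end

section
/- There is a constant C > 0 such that for all integers n ≥ 2 and 1 ≤ r ≤ n there exist an integer q ≤ 2^{Cr} · log₂ n and maps φ_1, …, φ_q : [n] → [r] with the property that for every subset W ⊆ [n] with |W| = r there is some i ∈ [q] for which the restriction of φ_i to W is bijective onto [r]. -/
/-!
Probabilistic method. A uniformly random map `[n] → [r]` is injective on a fixed `r`-set `W`
with probability `r! / r^r ≥ e^{-r}`, and a map injective on `W` is a bijection `W → [r]`.
So `q = ⌈e^r r log₂ n⌉` independent random maps all fail on `W` with probability
`(1 - e^{-r})^q ≤ exp (-r log₂ n) < n^{-r}`, and a union bound over the `C(n, r) ≤ n^r`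
sets `W` shows that some choice of `q` maps works for every `W` at once.
-/

open Finset Real

theorem Nat.card_subtype_injOn {α β : Type*} [Fintype α] [Fintype β] (W : Finset α) :
    Nat.card {f : α → β // Set.InjOn f W} =
      (Fintype.card β).descFactorial #W * Fintype.card β ^ (Fintype.card α - #W) := by
  classical
  let e := Equiv.piEquivPiSubtypeProd (· ∈ W) fun _ => β
  have hinj (f : α → β) : Set.InjOn f W ↔ Function.Injective (e f).1 :=
    Set.injOn_iff_injective
  rw [Nat.card_congr ((e.subtypeEquiv hinj).trans Equiv.prodSubtypeFstEquivSubtypeProd),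
    Nat.card_prod, Nat.card_congr (Equiv.subtypeInjectiveEquivEmbedding _ _), Nat.card_fun]
  simp [Fintype.card_embedding_eq, Fintype.card_subtype_compl]

theorem Set.InjOn.bijOn_univ_of_card_eq {α β : Type*} [Fintype β] {f : α → β} {W : Finset α}
    (hf : Set.InjOn f W) (hW : #W = Fintype.card β) : Set.BijOn f W Set.univ := by
  classical
  refine ⟨Set.mapsTo_univ _ _, hf, ?_⟩
  simpa using surjOn_of_injOn_of_card_le f (t := Finset.univ) (by simp) hf (by simp [hW])

theorem exists_tuple_forall_exists_of_card_mul_pow_lt {ι α : Type*} [Fintype α] [Nonempty α]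
    (S : Finset ι) (P : ι → α → Prop) {p : ℝ} (q : ℕ)
    (hP : ∀ W ∈ S, p * Nat.card α ≤ Nat.card {a // P W a}) (hS : #S * (1 - p) ^ q < 1) :
    ∃ φ : Fin q → α, ∀ W ∈ S, ∃ i, P W (φ i) := by
  classical
  by_contra! h
  set bad : ι → Finset α := fun W => {a | ¬P W a}
  have hcover : Fintype.card α ^ q ≤ ∑ W ∈ S, #(bad W) ^ q := calc
    Fintype.card α ^ q = #(univ : Finset (Fin q → α)) := by simp
    _ ≤ #(S.biUnion fun W => Fintype.piFinset fun _ => bad W) := by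
        refine card_le_card fun φ _ => ?_
        obtain ⟨W, hW, hφ⟩ := h φ
        exact mem_biUnion.2 ⟨W, hW, Fintype.mem_piFinset.2 fun i => by simp [bad, hφ i]⟩
    _ ≤ ∑ W ∈ S, #(bad W) ^ q := card_biUnion_le.trans_eq <| by simp
  have hbad (W) (hW : W ∈ S) : (#(bad W) : ℝ) ≤ (1 - p) * Fintype.card α := by
    have hgood := hP W hW
    simp only [Nat.card_eq_fintype_card, Fintype.card_subtype] at hgood
    have hsplit : (#{a | P W a} : ℝ) + #(bad W) = Fintype.card α := by
      exact_mod_cast card_filter_add_card_filter_not (s := univ) (p := P W)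
    linarith
  have hcount := calc
    (Fintype.card α : ℝ) ^ q ≤ ∑ W ∈ S, (#(bad W) : ℝ) ^ q := by exact_mod_cast hcover
    _ ≤ ∑ W ∈ S, ((1 - p) * Fintype.card α) ^ q :=
        sum_le_sum fun W hW => pow_le_pow_left₀ (Nat.cast_nonneg _) (hbad W hW) q
    _ = #S * (1 - p) ^ q * Fintype.card α ^ q := by
        rw [sum_const, nsmul_eq_mul, mul_pow, mul_assoc]
  have hα : (0 : ℝ) < Fintype.card α ^ q := by positivity
  exact hcount.not_gt ((mul_lt_iff_lt_one_left hα).2 hS)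

theorem exp_neg_mul_card_le_card_subtype_injOn {α β : Type*} [Fintype α] [Fintype β]
    {W : Finset α} (hW : #W = Fintype.card β) :
    exp (-Fintype.card β) * Nat.card (α → β) ≤
      Nat.card {f : α → β // Set.InjOn f W} := by
  set k := Fintype.card β
  have hk : k ≤ Fintype.card α := hW ▸ card_le_univ W
  have hfact : exp (-k) * (k : ℝ) ^ k ≤ k.factorial := by
    have hexp := pow_div_factorial_le_exp _ (Nat.cast_nonneg k) k
    rwa [div_le_iff₀ (by positivity), ← inv_mul_le_iff₀ (exp_pos _), ← exp_neg] at hexp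
  rw [Nat.card_subtype_injOn, hW, Nat.descFactorial_self, Nat.card_fun,
    Nat.card_eq_fintype_card, Nat.card_eq_fintype_card, ← Nat.add_sub_cancel' hk, pow_add,
    Nat.add_sub_cancel_left]
  push_cast
  rw [← mul_assoc]
  exact mul_le_mul_of_nonneg_right hfact (by positivity)

theorem Real.log_lt_logb_two {x : ℝ} (hx : 1 < x) : log x < logb 2 x := by
  have hlog2 : log 2 < 1 := by linarith [log_lt_sub_one_of_pos two_pos (by norm_num)]
  rw [logb, lt_div_iff₀ (log_pos one_lt_two)]
  exact mul_lt_of_lt_one_right (log_pos hx) hlog2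

theorem choose_mul_one_sub_exp_neg_pow_lt_one {n r q : ℕ} (hn : 2 ≤ n) (hr : 1 ≤ r)
    (hq : exp r * r * logb 2 n ≤ q) : (n.choose r : ℝ) * (1 - exp (-r)) ^ q < 1 := by
  have hn1 : (1 : ℝ) < n := by exact_mod_cast hn
  have hrlog : r * log n < q * exp (-r) := calc
    r * log n < r * logb 2 n := mul_lt_mul_of_pos_left (Real.log_lt_logb_two hn1) (by positivity)
    _ = exp r * r * logb 2 n * exp (-r) := by
        rw [exp_neg]; field_simp
    _ ≤ q * exp (-r) := mul_le_mul_of_nonneg_right hq (exp_pos _).le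
  have hchoose : (n.choose r : ℝ) ≤ exp (r * log n) := by
    rw [exp_nat_mul, exp_log (by positivity)]
    exact_mod_cast Nat.choose_le_pow n r
  have hpos : 0 ≤ 1 - exp (-r) := by simp [exp_le_one_iff]
  have hpow : (1 - exp (-r)) ^ q ≤ exp (-(q * exp (-r))) := calc
    (1 - exp (-r)) ^ q ≤ exp (-exp (-r)) ^ q := pow_le_pow_left₀ hpos (one_sub_le_exp_neg _) q
    _ = exp (-(q * exp (-r))) := by rw [← exp_nat_mul, mul_neg]
  calc (n.choose r : ℝ) * (1 - exp (-r)) ^ q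
      ≤ exp (r * log n) * exp (-(q * exp (-r))) :=
        mul_le_mul hchoose hpow (by positivity) (by positivity)
    _ < exp (r * log n) * exp (-(r * log n)) := by gcongr
    _ = 1 := by rw [← exp_add, add_neg_cancel, exp_zero]

theorem Real.exp_mul_add_one_le_eight_pow (r : ℕ) : exp r * r + 1 ≤ 8 ^ r := by
  have hexp : exp r ≤ 3 ^ r := by
    rw [← exp_one_pow]
    exact pow_le_pow_left₀ (exp_pos 1).le exp_one_lt_three.le r
  have hr : (r : ℝ) + 1 ≤ 2 ^ r := by exact_mod_cast Nat.lt_two_pow_self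
  calc exp r * r + 1 ≤ 3 ^ r * r + 3 ^ r := by gcongr; exact one_le_pow₀ (by norm_num)
    _ = 3 ^ r * (r + 1) := by ring
    _ ≤ 3 ^ r * 2 ^ r := by gcongr
    _ ≤ 8 ^ r := by rw [← mul_pow]; gcongr; norm_num

theorem ceil_exp_mul_logb_le_two_rpow_mul_logb {n : ℕ} (hn : 2 ≤ n) (r : ℕ) :
    (⌈exp r * r * logb 2 n⌉₊ : ℝ) ≤ 2 ^ (3 * r : ℝ) * logb 2 n := by
  have hlog : 1 ≤ logb 2 n := by
    rw [le_logb_iff_rpow_le one_lt_two (by positivity)]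
    exact_mod_cast hn
  calc (⌈exp r * r * logb 2 n⌉₊ : ℝ) ≤ exp r * r * logb 2 n + 1 :=
        (Nat.ceil_lt_add_one (by positivity)).le
    _ ≤ (exp r * r + 1) * logb 2 n := by nlinarith
    _ ≤ 8 ^ r * logb 2 n := by gcongr; exact Real.exp_mul_add_one_le_eight_pow r
    _ = 2 ^ (3 * r : ℝ) * logb 2 n := by rw [rpow_mul zero_le_two, rpow_natCast]; norm_num

/-- Theorem of Alon–Yuster–Zwick on perfect hash families.  There is a
constant `C > 0` such that for all `n ≥ 2` and `1 ≤ r ≤ n` there are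
`q ≤ 2^{Cr}·log₂ n` maps `φ_1, …, φ_q : [n] → [r]` such that every `r`-element subset
`W ⊆ [n]` is mapped bijectively onto `[r]` by at least one `φ_i`. -/
theorem statement13 :
    ∃ C : ℝ, 0 < C ∧
      ∀ n r : ℕ, 2 ≤ n → 1 ≤ r → r ≤ n →
        ∃ (q : ℕ) (φ : Fin q → (Fin n → Fin r)),
          (q : ℝ) ≤ (2 : ℝ) ^ (C * r) * Real.logb 2 (n : ℝ) ∧
          ∀ W : Finset (Fin n), W.card = r →
            ∃ i : Fin q, Set.BijOn (φ i) (W : Set (Fin n)) Set.univ := by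
  refine ⟨3, by norm_num, fun n r hn hr _ => ?_⟩
  have : Nonempty (Fin r) := ⟨⟨0, hr⟩⟩
  set q := ⌈exp r * r * logb 2 n⌉₊
  obtain ⟨φ, hφ⟩ := exists_tuple_forall_exists_of_card_mul_pow_lt (powersetCard r univ)
    (fun (W : Finset (Fin n)) (f : Fin n → Fin r) => Set.InjOn f W) (p := exp (-r)) q
    (fun W hW => by
      have hW : #W = Fintype.card (Fin r) := by simpa using mem_powersetCard_univ.1 hW
      simpa using exp_neg_mul_card_le_card_subtype_injOn (α := Fin n) hW)
    (by
      rw [card_powersetCard, card_univ, Fintype.card_fin]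
      exact choose_mul_one_sub_exp_neg_pow_lt_one hn hr (Nat.le_ceil _))
  refine ⟨q, φ, ceil_exp_mul_logb_le_two_rpow_mul_logb hn r, fun W hW => ?_⟩
  obtain ⟨i, hi⟩ := hφ W (mem_powersetCard_univ.2 hW)
  exact ⟨i, hi.bijOn_univ_of_card_eq (by simpa using hW)⟩
end

section
/- Let n ≥ 3 and let x ∈ ℝ^{E_n} and z = (z_{e,v,u}), indexed by triples with e ∈ E_n, v ∈ e, u ∈ [n]∖e, satisfy: x ≥ 0, z ≥ 0, x_{{v,w}} − z_{{v,w},v,u} − z_{{v,w},w,u} = 0 for all pairwise distinct v, w, u ∈ [n], and x_{{v,w}} + ∑_{u ∈ [n]∖{v,w}} z_{{v,u},u,w} = 1 for all distinct v, w ∈ [n]. Then for every subset S ⊆ [n] with 2 ≤ |S|, one has x(E_n(S)) ≤ |S| − 1, where x(E_n(S)) = ∑_{e ∈ E_n(S)} x_e. -/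
open scoped BigOperators
open Classical in
noncomputable section

/-- The edge `{v,w}` of `K_n`, for distinct nodes `v ≠ w`. -/
def mkEdge {n : ℕ} (v w : Fin n) (h : v ≠ w) : Edge n :=
  ⟨s(v, w), by simpa using h⟩

/-!
Fix `t ∈ S` and put `T = S \ {t}`. For distinct `v, w ∈ T` the first family of equations splits
`x_{vw} = z_{{v,w},v,t} + z_{{v,w},w,t}`, so `x(E_n(T)) = ∑_{v ∈ T} ∑_{w ∈ T \ {v}} z_{{v,w},w,t}`.
For `v ∈ T` the second family and `z ≥ 0` give `x_{vt} ≤ 1 - ∑_{w ∈ T \ {v}} z_{{v,w},w,t}`.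
Summing over `v ∈ T`, the `z`-terms cancel against `x(E_n(T))` and leave
`x(E_n(S)) ≤ |T| = |S| - 1`.
-/

open Finset

namespace Finset

variable {α M : Type*} [DecidableEq α] [AddCommMonoid M]

theorem sum_sym2_insert_filter_not_isDiag {a : α} {s : Finset α} (ha : a ∉ s)
    (p : Sym2 α → M) :
    ∑ e ∈ (insert a s).sym2 with ¬ e.IsDiag, p e
      = ∑ e ∈ s.sym2 with ¬ e.IsDiag, p e + ∑ b ∈ s, p s(a, b) := by
  rw [← cons_eq_insert a s ha, sym2_cons, filter_disjUnion, sum_disjUnion, filter_map,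
    sum_map, add_comm, filter_cons_of_neg _ _ _ _ (by simp)]
  congr 1
  rw [filter_true_of_mem fun b hb => by simpa using (ne_of_mem_of_not_mem hb ha).symm]
  rfl

theorem sum_sym2_filter_not_isDiag_eq_sum_sum_erase (s : Finset α) (f : α → α → M)
    (p : Sym2 α → M) (hp : ∀ a ∈ s, ∀ b ∈ s, a ≠ b → p s(a, b) = f a b + f b a) :
    ∑ e ∈ s.sym2 with ¬ e.IsDiag, p e = ∑ a ∈ s, ∑ b ∈ s.erase a, f a b := by
  induction s using Finset.induction_on with
  | empty => simp
  | insert a s ha ih =>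
    have hpa : ∀ b ∈ s, p s(a, b) = f a b + f b a := fun b hb =>
      hp a (mem_insert_self a s) b (mem_insert_of_mem hb) (ne_of_mem_of_not_mem hb ha).symm
    have herase : ∀ c ∈ s,
        ∑ b ∈ (insert a s).erase c, f c b = f c a + ∑ b ∈ s.erase c, f c b := fun c hc => by
      rw [erase_insert_of_ne (ne_of_mem_of_not_mem hc ha).symm,
        sum_insert fun h => ha (mem_of_mem_erase h)]
    rw [sum_sym2_insert_filter_not_isDiag ha,
      ih fun c hc d hd => hp c (mem_insert_of_mem hc) d (mem_insert_of_mem hd),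
      sum_insert ha, erase_insert ha, sum_congr rfl hpa, sum_congr rfl herase,
      sum_add_distrib, sum_add_distrib]
    abel

theorem sum_filter_forall_mem_eq_sum_sym2 [Fintype α]
    (f : {e : Sym2 α // ¬ e.IsDiag} → M) (S : Finset α)
    [DecidablePred fun e : {e : Sym2 α // ¬ e.IsDiag} => ∀ v ∈ e.1, v ∈ S] :
    ∑ e ∈ univ.filter (fun e : {e : Sym2 α // ¬ e.IsDiag} => ∀ v ∈ e.1, v ∈ S), f e
      = ∑ e ∈ S.sym2 with ¬ e.IsDiag, if h : e.IsDiag then 0 else f ⟨e, h⟩ := by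
  rw [← sum_subtype_eq_sum_filter (s := S.sym2)]
  refine sum_congr ?_ fun e _ => by rw [dif_neg e.property]
  ext e
  simp

end Finset

theorem statement18_general (n : ℕ)
    (x : Edge n → ℝ) (z : Fin n → Fin n → Fin n → ℝ)
    (hz : ∀ v w u : Fin n, v ≠ w → w ≠ u → v ≠ u → 0 ≤ z v w u)
    (heq1 : ∀ v w u : Fin n, ∀ (hvw : v ≠ w), w ≠ u → v ≠ u →
      x (mkEdge v w hvw) - z v w u - z w v u = 0)
    (heq2 : ∀ v w : Fin n, ∀ (hvw : v ≠ w),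
      x (mkEdge v w hvw) +
        ∑ u ∈ Finset.univ.filter (fun u : Fin n => u ≠ v ∧ u ≠ w), z u v w = 1) :
    ∀ S : Finset (Fin n), 2 ≤ S.card →
      ∑ e ∈ Finset.univ.filter (fun e : Edge n => ∀ v ∈ e.1, v ∈ S), x e
        ≤ (S.card : ℝ) - 1 := by
  intro S hS
  obtain ⟨t, ht⟩ : S.Nonempty := card_pos.mp (by omega)
  set T := S.erase t
  set X : Sym2 (Fin n) → ℝ := fun e => if h : e.IsDiag then 0 else x ⟨e, h⟩
  have X_mk : ∀ v w (h : v ≠ w), X s(v, w) = x (mkEdge v w h) := fun v w h => by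
    simp [X, mkEdge, h]
  have X_inner : ∀ v ∈ T, ∀ w ∈ T, v ≠ w → X s(v, w) = z w v t + z v w t := by
    intro v hv w hw hvw
    have := heq1 v w t hvw (ne_of_mem_erase hw) (ne_of_mem_erase hv)
    rw [X_mk v w hvw]
    linarith
  have X_incident_le : ∀ v ∈ T, X s(t, v) ≤ 1 - ∑ u ∈ T.erase v, z u v t := by
    intro v hv
    have hvt := ne_of_mem_erase hv
    have hsub : T.erase v ⊆ univ.filter (fun u => u ≠ v ∧ u ≠ t) := fun u hu => by
      simp [ne_of_mem_erase hu, ne_of_mem_erase (mem_of_mem_erase hu)]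
    have hle := sum_le_sum_of_subset_of_nonneg hsub fun u hu _ => by
      simp only [mem_filter] at hu
      exact hz u v t hu.2.1 hvt hu.2.2
    rw [Sym2.eq_swap, X_mk v t hvt]
    linarith [heq2 v t hvt]
  calc ∑ e ∈ univ.filter (fun e : Edge n => ∀ v ∈ e.1, v ∈ S), x e
      = ∑ e ∈ (insert t T).sym2 with ¬ e.IsDiag, X e := by
        rw [insert_erase ht, sum_filter_forall_mem_eq_sum_sym2]
    _ = ∑ v ∈ T, ∑ u ∈ T.erase v, z u v t + ∑ v ∈ T, X s(t, v) := by
        rw [sum_sym2_insert_filter_not_isDiag (notMem_erase t S),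
          sum_sym2_filter_not_isDiag_eq_sum_sum_erase T (fun v u => z u v t) X X_inner]
    _ ≤ ∑ v ∈ T, ∑ u ∈ T.erase v, z u v t + ∑ v ∈ T, (1 - ∑ u ∈ T.erase v, z u v t) := by
        gcongr with v hv
        exact X_incident_le v hv
    _ = (S.card : ℝ) - 1 := by
        rw [sum_sub_distrib, sum_const, nsmul_one, card_erase_of_mem ht, Nat.cast_pred (by omega)]
        ring

/-- validity of the extended formulation of the spanning tree
polytope.  Let `n ≥ 3`, let `x ∈ ℝ^{E_n}` and let `z v w u` (for pairwise distinct
`v, w, u`) stand for `z_{{v,w},v,u}` (edge `{v,w}`, chosen endpoint `v`, outside node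
`u`).  If `x ≥ 0`, `z ≥ 0`,
`x_{{v,w}} − z_{{v,w},v,u} − z_{{v,w},w,u} = 0` for pairwise distinct `v,w,u`, and
`x_{{v,w}} + ∑_{u∉{v,w}} z_{{v,u},u,w} = 1` for distinct `v,w`, then
`x(E_n(S)) ≤ |S| − 1` for every `S ⊆ [n]` with `|S| ≥ 2`. -/
theorem statement18 (n : ℕ) (hn : 3 ≤ n)
    (x : Edge n → ℝ) (z : Fin n → Fin n → Fin n → ℝ)
    (hx : ∀ e, 0 ≤ x e)
    (hz : ∀ v w u : Fin n, v ≠ w → w ≠ u → v ≠ u → 0 ≤ z v w u)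
    (heq1 : ∀ v w u : Fin n, ∀ (hvw : v ≠ w), w ≠ u → v ≠ u →
      x (mkEdge v w hvw) - z v w u - z w v u = 0)
    (heq2 : ∀ v w : Fin n, ∀ (hvw : v ≠ w),
      x (mkEdge v w hvw) +
        ∑ u ∈ Finset.univ.filter (fun u : Fin n => u ≠ v ∧ u ≠ w), z u v w = 1) :
    ∀ S : Finset (Fin n), 2 ≤ S.card →
      ∑ e ∈ Finset.univ.filter (fun e : Edge n => ∀ v ∈ e.1, v ∈ S), x e
        ≤ (S.card : ℝ) - 1 :=
  statement18_general n x z hz heq1 heq2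

end
end

section
/- Let n ≥ 2, let W ⊆ [n], and let M and M' be matchings in the complete graph K_n with |M| = |M'| and |W| < |M|. Let H = {π ∈ A_n : π(v) = v for all v ∈ W} be the group of even permutations of [n] fixing W pointwise, acting on matchings via π.M = {{π(v),π(w)} : {v,w} ∈ M}. Then M and M' lie in the same orbit under H if and only if M ∩ E_n(W) = M' ∩ E_n(W) and W ∖ V(M) = W ∖ V(M'), where V(M) denotes the set of nodes covered by M. -/
/-
Permutations fixing `W` pointwise preserve both the edges of `M` within `W` and the uncovered
nodes of `W`. Conversely, induct on the number of edges of `M` not within `W`: after moving `M`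
and `M'` by permutations fixing `W`, they share an edge `e` not within `W` (an edge with exactly
one end in `W` is forced by the invariants; otherwise any two edges avoiding `W` can be matched
up), and enlarging `W` by the ends of `e` keeps the invariants equal and lowers the count.
Finally, since `|W| < |M'|` some edge of `M'` avoids `W`, and the transposition of its ends fixes
`W` pointwise and `M'` setwise, so it corrects the parity of the permutation.
-/

open scoped BigOperators
open Classical in
noncomputable section

/-- Action of a node permutation on an edge: `π.{v,w} = {π v, π w}`. -/
def edgeMap {n : ℕ} (π : Equiv.Perm (Fin n)) (e : Edge n) : Edge n :=
  ⟨Sym2.map π e.1, by rw [Sym2.isDiag_map (Equiv.injective π)]; exact e.2⟩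

open Equiv Finset
open scoped Pointwise

section FixingSubgroup

variable {α : Type*} {s : Set α} {π : Perm α}

lemma Equiv.Perm.mem_fixingSubgroup_iff : π ∈ fixingSubgroup (Perm α) s ↔ ∀ v ∈ s, π v = v :=
  _root_.mem_fixingSubgroup_iff _

lemma Equiv.Perm.apply_mem_iff_of_mem_fixingSubgroup (hπ : π ∈ fixingSubgroup (Perm α) s)
    {v : α} : π v ∈ s ↔ v ∈ s := by
  refine ⟨fun h => ?_, fun h => (Perm.mem_fixingSubgroup_iff.1 hπ v h).symm ▸ h⟩
  rwa [← π.injective (Perm.mem_fixingSubgroup_iff.1 hπ _ h)]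

lemma Equiv.swap_mem_fixingSubgroup [DecidableEq α] {a b : α} (ha : a ∉ s) (hb : b ∉ s) :
    swap a b ∈ fixingSubgroup (Perm α) s :=
  Perm.mem_fixingSubgroup_iff.2 fun _ hv =>
    swap_apply_of_ne_of_ne (fun h => ha (h ▸ hv)) (fun h => hb (h ▸ hv))

end FixingSubgroup

variable {n : ℕ}

instance : MulAction (Perm (Fin n)) (Edge n) where
  smul := edgeMap
  one_smul e := Subtype.ext (congrFun Sym2.map_id' e.1)
  mul_smul σ τ e := Subtype.ext (Sym2.map_map (g := σ) (f := τ) e.1).symm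

namespace Edge

variable {π : Perm (Fin n)} {e : Edge n} {v : Fin n}

lemma smul_val (π : Perm (Fin n)) (e : Edge n) : (π • e).1 = Sym2.map π e.1 := rfl

lemma mem_smul_iff : v ∈ (π • e).1 ↔ π⁻¹ v ∈ e.1 := by
  rw [smul_val, Sym2.mem_map]
  constructor
  · rintro ⟨a, ha, rfl⟩
    simpa using ha
  · exact fun h => ⟨_, h, π.apply_symm_apply v⟩

lemma smul_eq_self (h : ∀ v ∈ e.1, π v = v) : π • e = e :=
  Subtype.ext ((Sym2.map_congr h).trans (congrFun Sym2.map_id' e.1))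

lemma exists_eq_mk (e : Edge n) : ∃ a b, a ≠ b ∧ e.1 = s(a, b) := by
  obtain ⟨z, hz⟩ := e
  induction z using Sym2.ind with
  | _ a b => exact ⟨a, b, fun h => hz (Sym2.mk_isDiag_iff.2 h), rfl⟩

end Edge

namespace IsMatching

variable {M : Finset (Edge n)}

lemma eq_of_mem (hM : IsMatching M) {e f : Edge n} (he : e ∈ M) (hf : f ∈ M) {v : Fin n}
    (hve : v ∈ e.1) (hvf : v ∈ f.1) : e = f :=
  by_contra fun h => hM e he f hf h v ⟨hve, hvf⟩

lemma smul (hM : IsMatching M) (π : Perm (Fin n)) : IsMatching (π • M) := by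
  simp only [IsMatching, mem_smul_finset, forall_exists_index, and_imp]
  rintro _ e he rfl _ f hf rfl hef v ⟨hve, hvf⟩
  exact hef (congrArg _ (hM.eq_of_mem he hf (Edge.mem_smul_iff.1 hve) (Edge.mem_smul_iff.1 hvf)))

lemma swap_smul_eq_self (hM : IsMatching M) {e : Edge n} (he : e ∈ M) {a b : Fin n}
    (hab : e.1 = s(a, b)) : swap a b • M = M := by
  have hfix : ∀ f ∈ M, swap a b • f = f := by
    intro f hf
    by_cases hfe : f = e
    · subst hfe
      exact Subtype.ext (by
        rw [Edge.smul_val, hab, Sym2.map_mk, swap_apply_left, swap_apply_right, Sym2.eq_swap])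
    · refine Edge.smul_eq_self fun v hv => swap_apply_of_ne_of_ne ?_ ?_ <;> rintro rfl <;>
        exact hfe (hM.eq_of_mem hf he hv (by simp [hab]))
  rw [smul_finset_def, image_congr hfix, image_id']

lemma exists_forall_notMem_of_card_lt (hM : IsMatching M) {W : Finset (Fin n)}
    (hW : W.card < M.card) : ∃ e ∈ M, ∀ v ∈ e.1, v ∉ W := by
  by_contra! h
  refine hW.not_ge (card_le_card_of_forall_subsingleton (fun e v => v ∈ e.1)
    (fun e he => ?_) fun v _ e ⟨he, hve⟩ f ⟨hf, hvf⟩ => hM.eq_of_mem he hf hve hvf)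
  obtain ⟨v, hv, hvW⟩ := h e he
  exact ⟨v, hvW, hv⟩

end IsMatching

def edgesWithin (W : Finset (Fin n)) (M : Finset (Edge n)) : Finset (Edge n) :=
  M.filter fun e => ∀ v ∈ e.1, v ∈ W

def uncovered (W : Finset (Fin n)) (M : Finset (Edge n)) : Finset (Fin n) :=
  W.filter fun v => ∀ e ∈ M, v ∉ e.1

section Invariants

variable {W : Finset (Fin n)} {M N : Finset (Edge n)} {π : Perm (Fin n)}

lemma card_edgesWithin_lt (hne : edgesWithin W M ≠ M) : (edgesWithin W M).card < M.card :=
  card_lt_card (ssubset_of_subset_of_ne (filter_subset _ _) hne)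

lemma smul_mem_iff_of_forall_mem (hπ : π ∈ fixingSubgroup (Perm (Fin n)) (W : Set (Fin n)))
    {e : Edge n} (he : ∀ v ∈ e.1, v ∈ W) : e ∈ π • M ↔ e ∈ M := by
  conv_lhs => rw [← Edge.smul_eq_self fun v hv => Perm.mem_fixingSubgroup_iff.1 hπ v (he v hv)]
  exact smul_mem_smul_finset_iff π

lemma edgesWithin_smul (hπ : π ∈ fixingSubgroup (Perm (Fin n)) (W : Set (Fin n))) :
    edgesWithin W (π • M) = edgesWithin W M := by
  ext e
  simp only [edgesWithin, mem_filter]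
  exact and_congr_left (smul_mem_iff_of_forall_mem hπ)

lemma uncovered_smul (hπ : π ∈ fixingSubgroup (Perm (Fin n)) (W : Set (Fin n))) :
    uncovered W (π • M) = uncovered W M := by
  ext v
  simp only [uncovered, mem_filter, mem_smul_finset, forall_exists_index, and_imp,
    forall_apply_eq_imp_iff₂, Edge.mem_smul_iff, and_congr_right_iff]
  intro hv
  rw [Perm.mem_fixingSubgroup_iff.1 (inv_mem hπ) v hv]

lemma edgesWithin_union_toFinset (hN : IsMatching N) {e : Edge n} (he : e ∈ N) :
    edgesWithin (W ∪ e.1.toFinset) N = insert e (edgesWithin W N) := by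
  ext f
  simp only [edgesWithin, mem_filter, mem_insert, mem_union, Sym2.mem_toFinset]
  constructor
  · rintro ⟨hf, hfW⟩
    refine or_iff_not_imp_left.2 fun hfe => ⟨hf, fun v hv => (hfW v hv).resolve_right
      fun hve => hfe (hN.eq_of_mem hf he hv hve)⟩
  · rintro (rfl | ⟨hf, hfW⟩)
    · exact ⟨he, fun v hv => Or.inr hv⟩
    · exact ⟨hf, fun v hv => Or.inl (hfW v hv)⟩

lemma uncovered_union_toFinset {e : Edge n} (he : e ∈ N) :
    uncovered (W ∪ e.1.toFinset) N = uncovered W N := by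
  ext v
  simp only [uncovered, mem_filter, mem_union, Sym2.mem_toFinset]
  exact ⟨fun ⟨hv, hunc⟩ => ⟨hv.resolve_right (hunc e he), hunc⟩,
    fun ⟨hv, hunc⟩ => ⟨Or.inl hv, hunc⟩⟩

end Invariants

def SameOrbit (W : Finset (Fin n)) (M M' : Finset (Edge n)) : Prop :=
  ∃ π ∈ fixingSubgroup (Perm (Fin n)) (W : Set (Fin n)), π • M = M'

namespace SameOrbit

variable {W W' : Finset (Fin n)} {M M' M'' : Finset (Edge n)}

lemma refl (W : Finset (Fin n)) (M : Finset (Edge n)) : SameOrbit W M M :=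
  ⟨1, one_mem _, one_smul _ _⟩

lemma of_smul {π : Perm (Fin n)} (hπ : π ∈ fixingSubgroup (Perm (Fin n)) (W : Set (Fin n))) :
    SameOrbit W M (π • M) :=
  ⟨π, hπ, rfl⟩

lemma symm : SameOrbit W M M' → SameOrbit W M' M
  | ⟨π, hπ, h⟩ => ⟨π⁻¹, inv_mem hπ, by rw [← h, inv_smul_smul]⟩

lemma trans : SameOrbit W M M' → SameOrbit W M' M'' → SameOrbit W M M''
  | ⟨π, hπ, h⟩, ⟨σ, hσ, h'⟩ => ⟨σ * π, mul_mem hσ hπ, by rw [mul_smul, h, h']⟩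

lemma mono (hWW' : W ⊆ W') : SameOrbit W' M M' → SameOrbit W M M'
  | ⟨π, hπ, h⟩ => ⟨π, fixingSubgroup_antitone _ _ (coe_subset.2 hWW') hπ, h⟩

end SameOrbit

section Moves

variable {W : Finset (Fin n)} {M M' : Finset (Edge n)}

/- The `W`-end `w` of `e'` is covered by some `e = s(w, z) ∈ M`, and `z ∉ W` because otherwise
`e` would be an edge of `M'` within `W` through `w`; the swap `z ↔ x` then carries `e` to `e'`. -/
lemma exists_mem_smul_of_straddling_edge (hM' : IsMatching M')
    (hin : edgesWithin W M = edgesWithin W M') (hunc : uncovered W M = uncovered W M')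
    {e' : Edge n} (he' : e' ∈ M') {w x : Fin n} (hw : w ∈ e'.1) (hwW : w ∈ W)
    (hx : x ∈ e'.1) (hxW : x ∉ W) :
    ∃ τ ∈ fixingSubgroup (Perm (Fin n)) (W : Set (Fin n)), e' ∈ τ • M := by
  have he'wx : e'.1 = s(w, x) := (Sym2.mem_and_mem_iff (ne_of_mem_of_not_mem hwW hxW)).1 ⟨hw, hx⟩
  obtain ⟨e, he, hwe⟩ : ∃ e ∈ M, w ∈ e.1 := by
    by_contra! h
    have : w ∈ uncovered W M' := hunc ▸ mem_filter.2 ⟨hwW, h⟩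
    exact (mem_filter.1 this).2 e' he' hw
  obtain ⟨z, hez⟩ : ∃ z, e.1 = s(w, z) := ⟨_, (Sym2.other_spec hwe).symm⟩
  have hzW : z ∉ W := by
    intro hzW
    have heW : ∀ v ∈ e.1, v ∈ W := by
      intro v hv
      rw [hez, Sym2.mem_iff] at hv
      rcases hv with rfl | rfl <;> assumption
    have hee' : e = e' :=
      hM'.eq_of_mem (mem_filter.1 (hin ▸ mem_filter.2 ⟨he, heW⟩ : e ∈ edgesWithin W M')).1
        he' hwe hw
    rw [hee', he'wx, Sym2.congr_right] at hez
    exact hxW (hez ▸ hzW)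
  have hτ := swap_mem_fixingSubgroup hzW hxW
  refine ⟨_, hτ, ?_⟩
  convert smul_mem_smul_finset he
  refine Subtype.ext ?_
  rw [Edge.smul_val, hez, Sym2.map_mk, swap_apply_left,
    Perm.mem_fixingSubgroup_iff.1 hτ w hwW, he'wx]

/- `swap a c` moves `a` to `c`; then `swap b' d`, with `b'` the image of `b`, fixes `c`. -/
lemma exists_smul_eq_of_forall_notMem {e e' : Edge n} (he : ∀ v ∈ e.1, v ∉ W)
    (he' : ∀ v ∈ e'.1, v ∉ W) :
    ∃ τ ∈ fixingSubgroup (Perm (Fin n)) (W : Set (Fin n)), τ • e = e' := by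
  obtain ⟨a, b, hab, hab'⟩ := e.exists_eq_mk
  obtain ⟨c, d, hcd, hcd'⟩ := e'.exists_eq_mk
  have hW : a ∉ W ∧ b ∉ W ∧ c ∉ W ∧ d ∉ W := by
    simp_all [Sym2.mem_iff]
  have h₁ := swap_mem_fixingSubgroup hW.1 hW.2.2.1
  have h₂ := swap_mem_fixingSubgroup
    ((Perm.apply_mem_iff_of_mem_fixingSubgroup h₁).not.2 hW.2.1) hW.2.2.2
  have hcb : c ≠ swap a c b := fun h =>
    hab ((swap a c).injective ((swap_apply_left a c).trans h))
  refine ⟨_, mul_mem h₂ h₁, Subtype.ext ?_⟩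
  rw [Edge.smul_val, hab', Sym2.map_mk, Perm.mul_apply, Perm.mul_apply, swap_apply_left,
    swap_apply_of_ne_of_ne hcb hcd, swap_apply_left, hcd']

end Moves

section Orbits

variable {W : Finset (Fin n)} {M M' : Finset (Edge n)}

/- If neither matching has an edge with one end in `W` and one outside, then every edge not
within `W` avoids `W`, and both matchings have such an edge since their edges within `W` agree. -/
lemma exists_common_edge_not_within (hM : IsMatching M) (hM' : IsMatching M')
    (hcard : M.card = M'.card) (hin : edgesWithin W M = edgesWithin W M')
    (hunc : uncovered W M = uncovered W M') (hne : edgesWithin W M ≠ M) :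
    ∃ τ ∈ fixingSubgroup (Perm (Fin n)) (W : Set (Fin n)),
      ∃ σ ∈ fixingSubgroup (Perm (Fin n)) (W : Set (Fin n)),
        ∃ e ∈ τ • M, e ∈ σ • M' ∧ ∃ x ∈ e.1, x ∉ W := by
  by_cases half' : ∃ e' ∈ M', ∃ w ∈ e'.1, w ∈ W ∧ ∃ x ∈ e'.1, x ∉ W
  · obtain ⟨e', he', w, hw, hwW, x, hx, hxW⟩ := half'
    obtain ⟨τ, hτ, hmem⟩ := exists_mem_smul_of_straddling_edge hM' hin hunc he' hw hwW hx hxW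
    exact ⟨τ, hτ, 1, one_mem _, e', hmem, by rwa [one_smul], x, hx, hxW⟩
  by_cases half : ∃ e ∈ M, ∃ w ∈ e.1, w ∈ W ∧ ∃ x ∈ e.1, x ∉ W
  · obtain ⟨e, he, w, hw, hwW, x, hx, hxW⟩ := half
    obtain ⟨σ, hσ, hmem⟩ :=
      exists_mem_smul_of_straddling_edge hM hin.symm hunc.symm he hw hwW hx hxW
    exact ⟨1, one_mem _, σ, hσ, e, by rwa [one_smul], hmem, x, hx, hxW⟩
  have avoid : ∀ N : Finset (Edge n), (¬ ∃ e ∈ N, ∃ w ∈ e.1, w ∈ W ∧ ∃ x ∈ e.1, x ∉ W) →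
      edgesWithin W N ≠ N → ∃ e ∈ N, (∀ v ∈ e.1, v ∉ W) ∧ ∃ x ∈ e.1, x ∉ W := by
    intro N hhalf hneN
    obtain ⟨e, he, hnot⟩ : ∃ e ∈ N, ¬ ∀ v ∈ e.1, v ∈ W := by
      by_contra! h
      exact hneN (filter_true_of_mem h)
    push Not at hhalf hnot
    obtain ⟨x, hx, hxW⟩ := hnot
    exact ⟨e, he, fun v hv hvW => hxW (hhalf e he v hv hvW x hx), x, hx, hxW⟩
  obtain ⟨e, he, heW, -⟩ := avoid M half hne
  obtain ⟨e', he', he'W, x, hx, hxW⟩ := avoid M' half' fun h =>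
    (card_edgesWithin_lt hne).ne (by rw [hin, h, hcard])
  obtain ⟨τ, hτ, rfl⟩ := exists_smul_eq_of_forall_notMem heW he'W
  exact ⟨τ, hτ, 1, one_mem _, τ • e, smul_mem_smul_finset he, by rwa [one_smul], x, hx, hxW⟩

theorem sameOrbit_of_edgesWithin_eq_of_uncovered_eq (hM : IsMatching M) (hM' : IsMatching M')
    (hcard : M.card = M'.card) (hin : edgesWithin W M = edgesWithin W M')
    (hunc : uncovered W M = uncovered W M') : SameOrbit W M M' := by
  induction hd : M.card - (edgesWithin W M).card using Nat.strong_induction_on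
    generalizing W M M' with
  | _ d ih =>
  by_cases hne : edgesWithin W M = M
  · obtain rfl : M = M' :=
      eq_of_subset_of_card_le (hne ▸ hin ▸ filter_subset _ _) hcard.ge
    exact .refl W M
  obtain ⟨τ, hτ, σ, hσ, e, heτ, heσ, x, hx, hxW⟩ :=
    exists_common_edge_not_within hM hM' hcard hin hunc hne
  have hrec : SameOrbit (W ∪ e.1.toFinset) (τ • M) (σ • M') := by
    refine ih _ ?_ (hM.smul τ) (hM'.smul σ) (by rw [card_smul_finset, card_smul_finset, hcard])
      ?_ ?_ rfl
    · have he : e ∉ edgesWithin W (τ • M) := fun h => hxW ((mem_filter.1 h).2 x hx)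
      rw [edgesWithin_union_toFinset (hM.smul τ) heτ, card_insert_of_notMem he,
        edgesWithin_smul hτ, card_smul_finset, ← hd]
      have := card_edgesWithin_lt hne
      omega
    · rw [edgesWithin_union_toFinset (hM.smul τ) heτ, edgesWithin_union_toFinset (hM'.smul σ) heσ,
        edgesWithin_smul hτ, edgesWithin_smul hσ, hin]
    · rw [uncovered_union_toFinset heτ, uncovered_union_toFinset heσ, uncovered_smul hτ,
        uncovered_smul hσ, hunc]
  exact ((SameOrbit.of_smul hτ).trans (hrec.mono subset_union_left)).trans
    (SameOrbit.of_smul hσ).symm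

lemma SameOrbit.exists_mem_alternatingGroup (h : SameOrbit W M M') (hM' : IsMatching M')
    {e : Edge n} (he : e ∈ M') (heW : ∀ v ∈ e.1, v ∉ W) :
    ∃ π ∈ alternatingGroup (Fin n), π ∈ fixingSubgroup (Perm (Fin n)) (W : Set (Fin n)) ∧
      π • M = M' := by
  obtain ⟨π, hπ, rfl⟩ := h
  obtain ⟨a, b, hab, he_ab⟩ := e.exists_eq_mk
  rcases Int.units_eq_one_or (Perm.sign π) with hs | hs
  · exact ⟨π, hs, hπ, rfl⟩
  · refine ⟨swap a b * π, by simp [Perm.mem_alternatingGroup, hs, Perm.sign_swap hab],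
      mul_mem (swap_mem_fixingSubgroup (heW a ?_) (heW b ?_)) hπ,
      by rw [mul_smul, hM'.swap_smul_eq_self he he_ab]⟩ <;> simp [he_ab]

end Orbits

theorem statement19_general (n : ℕ) (W : Finset (Fin n))
    (M M' : Finset (Edge n)) (hM : IsMatching M) (hM' : IsMatching M')
    (hcard : M.card = M'.card) (hW : W.card < M.card) :
    (∃ π : Equiv.Perm (Fin n), π ∈ alternatingGroup (Fin n) ∧
        (∀ v ∈ W, π v = v) ∧ M.image (edgeMap π) = M') ↔
      (M.filter (fun e : Edge n => ∀ v ∈ e.1, v ∈ W)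
          = M'.filter (fun e : Edge n => ∀ v ∈ e.1, v ∈ W) ∧
        W.filter (fun v : Fin n => ∀ e ∈ M, v ∉ e.1)
          = W.filter (fun v : Fin n => ∀ e ∈ M', v ∉ e.1)) := by
  constructor
  · rintro ⟨π, -, hfix, rfl⟩
    have hπ := Perm.mem_fixingSubgroup_iff.2 hfix
    exact ⟨(edgesWithin_smul hπ).symm, (uncovered_smul hπ).symm⟩
  · rintro ⟨hin, hunc⟩
    obtain ⟨e, he, heW⟩ := hM'.exists_forall_notMem_of_card_lt (hcard ▸ hW)
    have horbit := sameOrbit_of_edgesWithin_eq_of_uncovered_eq hM hM' hcard hin hunc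
    obtain ⟨π, hsign, hπ, hπM⟩ := horbit.exists_mem_alternatingGroup hM' he heW
    exact ⟨π, hsign, Perm.mem_fixingSubgroup_iff.1 hπ, hπM⟩

/-- orbit characterization, after Yannakakis.  Let `n ≥ 2`,
`W ⊆ [n]`, and let `M, M'` be matchings in `K_n` with `|M| = |M'|` and `|W| < |M|`.
Then `M` and `M'` are in the same orbit under the group
`H = {π ∈ A_n : π(v) = v for all v ∈ W}` (acting on matchings by
`π.M = {{π v, π w} : {v,w} ∈ M}`) if and only if `M ∩ E_n(W) = M' ∩ E_n(W)` and
`W ∖ V(M) = W ∖ V(M')`. -/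
theorem statement19 (n : ℕ) (hn : 2 ≤ n) (W : Finset (Fin n))
    (M M' : Finset (Edge n)) (hM : IsMatching M) (hM' : IsMatching M')
    (hcard : M.card = M'.card) (hW : W.card < M.card) :
    (∃ π : Equiv.Perm (Fin n), π ∈ alternatingGroup (Fin n) ∧
        (∀ v ∈ W, π v = v) ∧ M.image (edgeMap π) = M') ↔
      (M.filter (fun e : Edge n => ∀ v ∈ e.1, v ∈ W)
          = M'.filter (fun e : Edge n => ∀ v ∈ e.1, v ∈ W) ∧
        W.filter (fun v : Fin n => ∀ e ∈ M, v ∉ e.1)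
          = W.filter (fun v : Fin n => ∀ e ∈ M', v ∉ e.1)) :=
  statement19_general n W M M' hM hM' hcard hW
end
end
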